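/- arXiv:2603.06261 — 4 statements merged into one kernel-verified Lean document; each statement's English description precedes it below -/
import Mathlib

section
/- Let b_1(n),…,b_{k−1}(n) be sequences in [1,∞) such that for some constants 1/2 < θ_1 ≤ θ_2 < 1 one has n^{θ_1} ≤ b_i(n) ≤ n^{θ_2} for all i and all sufficiently large n. Then S_B^{(k−1)}(n) = O((max_i b_i(n) / n)^α) as n → ∞. -/
open MeasureTheory Filter Set
open scoped ENNReal

noncomputable section

/-- `f_n(h_1,…,h_k) = ∏_{1≤i<j≤k} min(h_i h_j/(μ n), 1)`. -/
def fDef (μ : ℝ) (n k : ℕ) (x : Fin k → ℝ) : ℝ :=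
  ∏ p ∈ Finset.univ.filter (fun p : Fin k × Fin k => p.1 < p.2),
    min (x p.1 * x p.2 / (μ * n)) 1

/-- `S_B^{(h)}(n) = ∫_{[1,∞)^{k-h}} f_n(b_1,…,b_h, x_{h+1},…,x_k) dF(x_{h+1})⋯dF(x_k)`. -/
def SB (ν : Measure ℝ) (μ : ℝ) (k h : ℕ) (b : Fin h → ℝ) (n : ℕ) : ℝ :=
  ∫ x in Set.univ.pi (fun _ : Fin (k - h) => Set.Ici (1 : ℝ)),
    fDef μ n k (fun i =>
      if hlt : i.val < h then b ⟨i.val, hlt⟩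
      else x ⟨i.val - h, by have := i.isLt; omega⟩)
    ∂(Measure.pi fun _ : Fin (k - h) => ν)

lemma key_tail_bound (α : ℝ) (hα1 : 1 < α) (hα2 : α < 2)
    (ν : Measure ℝ) [IsProbabilityMeasure ν] (hsupp : ν (Set.Iio 1) = 0)
    (C' : ℝ) (hC' : 1 ≤ C')
    (htail' : ∀ r : ℝ, 0 < r → (ν (Set.Ioi r)).toReal ≤ C' * r ^ (-α))
    (c : ℝ) (hc0 : 0 < c) (hc1 : c ≤ 1) :
    ∫ x, min (c * x) 1 ^ 2 ∂ν ≤ (C' ^ (2/α) + C' / (1 - α/2)) * c ^ α := by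
  set φ : ℝ → ℝ := fun x => min (c * x) 1 ^ 2 with hφ
  have hφ0 : ∀ x, 0 ≤ φ x := fun x => sq_nonneg _
  have hcont : Continuous φ := ((continuous_const.mul continuous_id).min continuous_const).pow 2
  set t0 : ℝ := C' ^ (2/α) * c ^ (2:ℝ) with ht0
  set K : ℝ := C' * c ^ α with hK
  have hC'0 : (0:ℝ) < C' := lt_of_lt_of_le one_pos hC'
  have hcα : (0:ℝ) < c ^ α := Real.rpow_pos_of_pos hc0 α
  have hK0 : 0 < K := mul_pos hC'0 hcα
  have ht00 : 0 < t0 := mul_pos (Real.rpow_pos_of_pos hC'0 _) (Real.rpow_pos_of_pos hc0 _)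
  have hβ : α/2 < 1 := by linarith
  have hβ0 : 0 < α/2 := by linarith
  -- rewrite as lintegral and apply layer cake
  have hrepr : ∫ x, φ x ∂ν = (∫⁻ x, ENNReal.ofReal (φ x) ∂ν).toReal :=
    integral_eq_lintegral_of_nonneg_ae (Eventually.of_forall hφ0) hcont.aestronglyMeasurable
  have hlayer : ∫⁻ x, ENNReal.ofReal (φ x) ∂ν = ∫⁻ t in Ioi 0, ν {a : ℝ | t < φ a} :=
    lintegral_eq_lintegral_meas_lt ν (Eventually.of_forall hφ0) hcont.measurable.aemeasurable
  -- pointwise bound on the measures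
  have hbound : ∀ t ∈ Ioi (0:ℝ), ν {a : ℝ | t < φ a} ≤
      (Ioc (0:ℝ) t0).indicator (fun _ => 1) t
        + (Ioc t0 1).indicator (fun t => ENNReal.ofReal (K * t ^ (-(α/2)))) t := by
    intro t ht
    replace ht : (0:ℝ) < t := ht
    by_cases h1 : t ≤ t0
    · refine le_trans prob_le_one ?_
      rw [Set.indicator_of_mem (Set.mem_Ioc.mpr ⟨ht, h1⟩)]
      exact le_self_add
    · push_neg at h1
      by_cases h2 : t ≤ 1
      · rw [Set.indicator_of_notMem (fun hm => not_le.mpr h1 hm.2),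
          Set.indicator_of_mem (Set.mem_Ioc.mpr ⟨h1, h2⟩), zero_add]
        -- the set is contained in Iio 1 ∪ Ioi (√t / c)
        have hsub : {a : ℝ | t < φ a} ⊆ Iio 1 ∪ Ioi (Real.sqrt t / c) := by
          intro a ha
          by_cases ha1 : a < 1
          · exact Or.inl ha1
          · push_neg at ha1
            right
            have ha' : t < min (c * a) 1 ^ 2 := ha
            have hmin0 : 0 < min (c * a) 1 :=
              lt_min (mul_pos hc0 (lt_of_lt_of_le one_pos ha1)) one_pos
            have hs : Real.sqrt t < min (c * a) 1 := (Real.sqrt_lt' hmin0).mpr ha'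
            have hlt : Real.sqrt t < c * a := lt_of_lt_of_le hs (min_le_left _ _)
            rw [Set.mem_Ioi, div_lt_iff₀ hc0]
            linarith
        refine le_trans (measure_mono hsub) (le_trans (measure_union_le _ _) ?_)
        rw [hsupp, zero_add]
        have hr0 : 0 < Real.sqrt t / c := div_pos (Real.sqrt_pos.mpr ht) hc0
        have hb := htail' _ hr0
        have heq : C' * (Real.sqrt t / c) ^ (-α) = K * t ^ (-(α/2)) := by
          rw [Real.div_rpow (Real.sqrt_nonneg t) hc0.le, Real.sqrt_eq_rpow,
            ← Real.rpow_mul ht.le, show (1/2 : ℝ) * -α = -(α/2) by ring,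
            Real.rpow_neg hc0.le, div_eq_mul_inv, inv_inv, hK]
          ring
        rw [← heq, ← ENNReal.ofReal_toReal (measure_ne_top ν _)]
        exact ENNReal.ofReal_le_ofReal hb
      · push_neg at h2
        rw [Set.indicator_of_notMem (fun hm => not_lt.mpr hm.2 h1),
          Set.indicator_of_notMem (fun hm => not_lt.mpr hm.2 h2), add_zero]
        refine le_of_le_of_eq (measure_mono ?_) hsupp
        intro a ha
        by_contra hcon
        rw [Set.mem_Iio, not_lt] at hcon
        have hmin0 : 0 ≤ min (c * a) 1 :=
          le_min (mul_nonneg hc0.le (le_trans zero_le_one hcon)) zero_le_one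
        have hle1 : φ a ≤ 1 := pow_le_one₀ hmin0 (min_le_right _ _)
        have hgt : t < φ a := ha
        linarith
  -- the integrability of t ↦ K * t ^ (-(α/2)) on (0,1]
  have hio : IntegrableOn (fun t : ℝ => K * t ^ (-(α/2))) (Ioc 0 1) := by
    have h := (intervalIntegral.intervalIntegrable_rpow'
      (show (-1:ℝ) < -(α/2) by linarith) (a := 0) (b := 1)).const_mul K
    rwa [intervalIntegrable_iff, uIoc_of_le zero_le_one] at h
  have hval : ∫ t in Ioc (0:ℝ) 1, K * t ^ (-(α/2)) = K * (1 - α/2)⁻¹ := by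
    rw [← intervalIntegral.integral_of_le zero_le_one, intervalIntegral.integral_const_mul,
      integral_rpow (Or.inl (by linarith : (-1:ℝ) < -(α/2))), Real.one_rpow,
      Real.zero_rpow (show -(α/2) + 1 ≠ 0 from (by linarith : (0:ℝ) < -(α/2)+1).ne'),
      sub_zero, show -(α/2) + 1 = 1 - α/2 by ring, one_div]
  have hmeas1 : Measurable ((Ioc (0:ℝ) t0).indicator (fun _ => (1:ℝ≥0∞))) :=
    measurable_const.indicator measurableSet_Ioc
  have hstep : ∫⁻ t in Ioi (0:ℝ), ν {a : ℝ | t < φ a} ≤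
      ENNReal.ofReal t0 + ENNReal.ofReal (K * (1 - α/2)⁻¹) := by
    calc ∫⁻ t in Ioi (0:ℝ), ν {a : ℝ | t < φ a}
        ≤ ∫⁻ t in Ioi (0:ℝ), ((Ioc (0:ℝ) t0).indicator (fun _ => 1) t
            + (Ioc t0 1).indicator (fun t => ENNReal.ofReal (K * t ^ (-(α/2)))) t) :=
          setLIntegral_mono' measurableSet_Ioi hbound
      _ = (∫⁻ t in Ioi (0:ℝ), (Ioc (0:ℝ) t0).indicator (fun _ => 1) t)
            + ∫⁻ t in Ioi (0:ℝ), (Ioc t0 1).indicator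
              (fun t => ENNReal.ofReal (K * t ^ (-(α/2)))) t :=
          lintegral_add_left hmeas1 _
      _ ≤ ENNReal.ofReal t0 + ENNReal.ofReal (K * (1 - α/2)⁻¹) := by
          refine add_le_add ?_ ?_
          · calc ∫⁻ t in Ioi (0:ℝ), (Ioc (0:ℝ) t0).indicator (fun _ => 1) t
                ≤ ∫⁻ t, (Ioc (0:ℝ) t0).indicator (fun _ => 1) t :=
                  lintegral_mono' Measure.restrict_le_self (le_refl _)
              _ = 1 * volume (Ioc (0:ℝ) t0) := lintegral_indicator_const measurableSet_Ioc 1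
              _ = ENNReal.ofReal t0 := by rw [one_mul, Real.volume_Ioc, sub_zero]
          · calc ∫⁻ t in Ioi (0:ℝ), (Ioc t0 1).indicator
                  (fun t => ENNReal.ofReal (K * t ^ (-(α/2)))) t
                ≤ ∫⁻ t, (Ioc t0 1).indicator (fun t => ENNReal.ofReal (K * t ^ (-(α/2)))) t :=
                  lintegral_mono' Measure.restrict_le_self (le_refl _)
              _ = ∫⁻ t in Ioc t0 1, ENNReal.ofReal (K * t ^ (-(α/2))) :=
                  lintegral_indicator measurableSet_Ioc _
              _ ≤ ∫⁻ t in Ioc (0:ℝ) 1, ENNReal.ofReal (K * t ^ (-(α/2))) :=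
                  lintegral_mono_set (Ioc_subset_Ioc_left ht00.le)
              _ = ENNReal.ofReal (∫ t in Ioc (0:ℝ) 1, K * t ^ (-(α/2))) :=
                  (ofReal_integral_eq_lintegral_ofReal hio
                    (ae_restrict_of_forall_mem measurableSet_Ioc
                      (fun t htm => le_of_lt (mul_pos hK0 (Real.rpow_pos_of_pos htm.1 _))))).symm
              _ = ENNReal.ofReal (K * (1 - α/2)⁻¹) := by rw [hval]
  have hq : (0:ℝ) < (1 - α/2)⁻¹ := inv_pos.mpr (by linarith)
  rw [hrepr, hlayer]
  have hfin : (∫⁻ t in Ioi (0:ℝ), ν {a : ℝ | t < φ a}).toReal ≤ t0 + K * (1 - α/2)⁻¹ := by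
    rw [← ENNReal.ofReal_add ht00.le (le_of_lt (mul_pos hK0 hq))] at hstep
    exact ENNReal.toReal_le_of_le_ofReal (add_nonneg ht00.le (le_of_lt (mul_pos hK0 hq))) hstep
  refine le_trans hfin ?_
  have h2α : c ^ (2:ℝ) ≤ c ^ α := Real.rpow_le_rpow_of_exponent_ge hc0 hc1 hα2.le
  calc t0 + K * (1 - α/2)⁻¹ = C' ^ (2/α) * c ^ (2:ℝ) + C' * c ^ α * (1 - α/2)⁻¹ := by
        rw [ht0, hK]
    _ ≤ C' ^ (2/α) * c ^ α + C' * c ^ α * (1 - α/2)⁻¹ := by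
        have := mul_le_mul_of_nonneg_left h2α (Real.rpow_nonneg hC'0.le (2/α))
        linarith
    _ = (C' ^ (2/α) + C' / (1 - α/2)) * c ^ α := by ring

/-- for `h = k-1` hubs with `n^{θ₁} ≤ b_i(n) ≤ n^{θ₂}`, `1/2 < θ₁ ≤ θ₂ < 1`,
`S_B^{(k-1)}(n) = O((max_i b_i(n) / n)^α)`. -/
theorem stmt6
    (α : ℝ) (hα : α ∈ Set.Ioo (1 : ℝ) 2)
    (ν : Measure ℝ) [IsProbabilityMeasure ν]
    (hsupp : ν (Set.Iio 1) = 0)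
    (htail : Tendsto (fun x : ℝ => x ^ α * (ν (Set.Ioi x)).toReal) atTop (nhds 1))
    (hint : Integrable (fun x : ℝ => x) ν)
    (μ : ℝ) (hμ : μ = ∫ x, x ∂ν)
    (k : ℕ) (hk : 3 ≤ k)
    (b : Fin (k - 1) → ℕ → ℝ) (hbval : ∀ i m, 1 ≤ b i m)
    (θ₁ θ₂ : ℝ) (hθ₁ : 1 / 2 < θ₁) (hθ₁₂ : θ₁ ≤ θ₂) (hθ₂ : θ₂ < 1)
    (hb : ∀ᶠ n : ℕ in atTop, ∀ i, (n : ℝ) ^ θ₁ ≤ b i n ∧ b i n ≤ (n : ℝ) ^ θ₂) :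
    ∃ C : ℝ, ∃ n₀ : ℕ, 0 < C ∧ ∀ n, n₀ ≤ n →
      |SB ν μ k (k - 1) (fun i => b i n) n| ≤
        C * ((⨆ i, b i n) / (n : ℝ)) ^ α := by
  obtain ⟨hα1, hα2⟩ := hα
  -- the mean is at least 1
  have hae1 : ∀ᵐ x ∂ν, (1:ℝ) ≤ x := by
    rw [ae_iff]
    refine measure_mono_null ?_ hsupp
    intro x hx
    simpa [Set.mem_Iio] using not_le.mp hx
  have hμ1 : 1 ≤ μ := by
    rw [hμ]
    calc (1:ℝ) = ∫ _x, (1:ℝ) ∂ν := by simp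
      _ ≤ ∫ x, x ∂ν := integral_mono_ae (integrable_const 1) hint hae1
  have hμ0 : (0:ℝ) < μ := lt_of_lt_of_le one_pos hμ1
  -- uniform tail constant
  obtain ⟨M, hM⟩ := eventually_atTop.mp
    (htail.eventually_le_const (show (1:ℝ) < 2 by norm_num))
  set M' : ℝ := max M 1 with hM'def
  have hM'1 : (1:ℝ) ≤ M' := le_max_right _ _
  set C' : ℝ := max 2 (M' ^ α) with hC'def
  have hC' : (1:ℝ) ≤ C' := le_trans (by norm_num) (le_max_left _ _)
  have hC'0 : (0:ℝ) < C' := lt_of_lt_of_le one_pos hC'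
  have htail' : ∀ r : ℝ, 0 < r → (ν (Set.Ioi r)).toReal ≤ C' * r ^ (-α) := by
    intro r hr
    have hrpos : (0:ℝ) < r ^ α := Real.rpow_pos_of_pos hr α
    by_cases hrM : M' ≤ r
    · have h2 := hM r (le_trans (le_max_left _ _) hrM)
      have hT : (ν (Set.Ioi r)).toReal ≤ 2 / r ^ α := by
        rw [le_div_iff₀ hrpos]
        linarith [h2]
      rw [div_eq_mul_inv, ← Real.rpow_neg hr.le] at hT
      refine le_trans hT (mul_le_mul_of_nonneg_right (le_max_left _ _)
        (Real.rpow_pos_of_pos hr _).le)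
    · push_neg at hrM
      have h1 : (ν (Set.Ioi r)).toReal ≤ 1 :=
        ENNReal.toReal_le_of_le_ofReal zero_le_one (by simpa using prob_le_one (μ := ν))
      refine le_trans h1 ?_
      have hra : r ^ α ≤ C' :=
        le_trans (Real.rpow_le_rpow hr.le hrM.le (by linarith)) (le_max_right _ _)
      rw [Real.rpow_neg hr.le]
      calc (1:ℝ) = r ^ α * (r ^ α)⁻¹ := (mul_inv_cancel₀ hrpos.ne').symm
        _ ≤ C' * (r ^ α)⁻¹ := mul_le_mul_of_nonneg_right hra (inv_nonneg.mpr hrpos.le)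
  -- the constant
  have h1α2 : (0:ℝ) < 1 - α/2 := by linarith
  set D : ℝ := C' ^ (2/α) + C' / (1 - α/2) with hDdef
  have hD0 : 0 < D := add_pos (Real.rpow_pos_of_pos hC'0 _) (div_pos hC'0 h1α2)
  have hμα : (0:ℝ) < μ ^ α := Real.rpow_pos_of_pos hμ0 α
  refine ⟨D / μ ^ α, ?_⟩
  obtain ⟨N, hN⟩ := eventually_atTop.mp hb
  refine ⟨max N 1, div_pos hD0 hμα, ?_⟩
  intro n hn
  have hnN : N ≤ n := le_trans (le_max_left _ _) hn
  have hn1 : 1 ≤ n := le_trans (le_max_right _ _) hn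
  have hn0 : (0:ℝ) < (n:ℝ) := by exact_mod_cast hn1
  have hn1' : (1:ℝ) ≤ (n:ℝ) := by exact_mod_cast hn1
  have hNn := hN n hnN
  haveI : Nonempty (Fin (k-1)) := ⟨⟨0, by omega⟩⟩
  set B : ℝ := ⨆ i, b i n with hBdef
  have hBb : ∀ i, b i n ≤ B := by
    intro i
    rw [hBdef]
    exact le_ciSup (Set.Finite.bddAbove (Set.finite_range fun j => b j n)) i
  have hB1 : (1:ℝ) ≤ B := le_trans (hbval ⟨0, by omega⟩ n) (hBb _)
  have hBn : B ≤ (n:ℝ) := by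
    refine ciSup_le fun i => le_trans (hNn i).2 ?_
    calc (n:ℝ) ^ θ₂ ≤ (n:ℝ) ^ (1:ℝ) :=
          Real.rpow_le_rpow_of_exponent_le hn1' hθ₂.le
      _ = (n:ℝ) := Real.rpow_one _
  have hμn : (0:ℝ) < μ * n := mul_pos hμ0 hn0
  set c : ℝ := B / (μ * n) with hcdef
  have hc0 : 0 < c := div_pos (by linarith) hμn
  have hc1 : c ≤ 1 := by
    rw [hcdef, div_le_one hμn]
    exact le_trans hBn (le_mul_of_one_le_left hn0.le hμ1)
  -- the single remaining coordinate
  have hk1 : k - (k - 1) = 1 := by omega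
  haveI huniq : Unique (Fin (k - (k-1))) := by rw [hk1]; infer_instance
  set S : Set (Fin (k - (k-1)) → ℝ) :=
    Set.univ.pi (fun _ : Fin (k - (k-1)) => Set.Ici (1 : ℝ)) with hSdef
  have hSmeas : MeasurableSet S := MeasurableSet.univ_pi (fun _ => measurableSet_Ici)
  set π : Measure (Fin (k - (k-1)) → ℝ) := Measure.pi (fun _ => ν) with hπdef
  have hpieq : @Measure.pi (Fin (k - (k-1))) (fun _ => ℝ) Unique.fintype
      (fun _ => Real.measurableSpace) (fun _ => ν) = π := by
    rw [hπdef]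
    exact congrArg (fun I : Fintype (Fin (k - (k-1))) => @Measure.pi _ _ I _ fun _ => ν)
      (Subsingleton.elim _ _)
  -- facts about the integrand
  have hF0 : ∀ x : Fin (k - (k-1)) → ℝ, x ∈ S →
      0 ≤ fDef μ n k (fun i =>
        if hlt : i.val < k - 1 then b ⟨i.val, hlt⟩ n
        else x ⟨i.val - (k - 1), by have := i.isLt; omega⟩) := by
    intro x hx
    have hx' : ∀ j, 1 ≤ x j := fun j => (Set.mem_univ_pi.mp hx j : x j ∈ Set.Ici 1)
    refine Finset.prod_nonneg fun p _ => le_min ?_ zero_le_one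
    have h1 : (1:ℝ) ≤ (fun i => if hlt : i.val < k - 1 then b ⟨i.val, hlt⟩ n
        else x ⟨i.val - (k - 1), by have := i.isLt; omega⟩) p.1 := by
      dsimp only; split
      · exact hbval _ n
      · exact hx' _
    have h2 : (1:ℝ) ≤ (fun i => if hlt : i.val < k - 1 then b ⟨i.val, hlt⟩ n
        else x ⟨i.val - (k - 1), by have := i.isLt; omega⟩) p.2 := by
      dsimp only; split
      · exact hbval _ n
      · exact hx' _
    exact div_nonneg (mul_nonneg (by linarith) (by linarith)) hμn.le
  have hFle : ∀ x : Fin (k - (k-1)) → ℝ, x ∈ S →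
      fDef μ n k (fun i =>
        if hlt : i.val < k - 1 then b ⟨i.val, hlt⟩ n
        else x ⟨i.val - (k - 1), by have := i.isLt; omega⟩)
        ≤ min (c * x default) 1 ^ 2 := by
    intro x hx
    have hx' : ∀ j, 1 ≤ x j := fun j => (Set.mem_univ_pi.mp hx j : x j ∈ Set.Ici 1)
    have hxd : 1 ≤ x default := hx' default
    have hxd0 : 0 ≤ x default := by linarith
    set Y : Fin k → ℝ := fun i =>
      if hlt : i.val < k - 1 then b ⟨i.val, hlt⟩ n
      else x ⟨i.val - (k - 1), by have := i.isLt; omega⟩ with hYdef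
    have hY1 : ∀ i, 1 ≤ Y i := by
      intro i; rw [hYdef]; dsimp only; split
      · exact hbval _ n
      · exact hx' _
    have hfac0 : ∀ p : Fin k × Fin k, 0 ≤ min (Y p.1 * Y p.2 / (μ * n)) 1 := fun p =>
      le_min (div_nonneg (mul_nonneg (by linarith [hY1 p.1]) (by linarith [hY1 p.2]))
        hμn.le) zero_le_one
    have hfac1 : ∀ p : Fin k × Fin k, min (Y p.1 * Y p.2 / (μ * n)) 1 ≤ 1 :=
      fun p => min_le_right _ _
    have hYlast : Y ⟨k-1, by omega⟩ = x default := by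
      rw [hYdef]; dsimp only
      rw [dif_neg (by omega : ¬ (k-1 < k-1))]
      exact congrArg x (Subsingleton.elim _ _)
    have hY0 : Y ⟨0, by omega⟩ = b ⟨0, by omega⟩ n := by
      rw [hYdef]; exact dif_pos (show 0 < k - 1 by omega)
    have hY1' : Y ⟨1, by omega⟩ = b ⟨1, by omega⟩ n := by
      rw [hYdef]; exact dif_pos (show 1 < k - 1 by omega)
    have hcxd : c * x default = B * x default / (μ * n) := by
      rw [hcdef]; exact div_mul_eq_mul_div _ _ _
    have hg : ∀ i : Fin (k-1), min (b i n * x default / (μ * n)) 1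
        ≤ min (c * x default) 1 := by
      intro i
      rw [hcxd]
      exact min_le_min ((div_le_div_iff_of_pos_right hμn).mpr
        (mul_le_mul_of_nonneg_right (hBb i) hxd0)) le_rfl
    have hmem0 : ((⟨0, by omega⟩, ⟨k-1, by omega⟩) : Fin k × Fin k) ∈
        Finset.univ.filter (fun p : Fin k × Fin k => p.1 < p.2) :=
      Finset.mem_filter.mpr ⟨Finset.mem_univ _, Fin.mk_lt_mk.mpr (by omega)⟩
    have hmem1 : ((⟨1, by omega⟩, ⟨k-1, by omega⟩) : Fin k × Fin k) ∈
        Finset.univ.filter (fun p : Fin k × Fin k => p.1 < p.2) :=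
      Finset.mem_filter.mpr ⟨Finset.mem_univ _, Fin.mk_lt_mk.mpr (by omega)⟩
    have hne : ((⟨0, by omega⟩, ⟨k-1, by omega⟩) : Fin k × Fin k) ≠
        (⟨1, by omega⟩, ⟨k-1, by omega⟩) := by
      simp [Prod.ext_iff, Fin.ext_iff]
    have hTsub : ({(⟨0, by omega⟩, ⟨k-1, by omega⟩),
        (⟨1, by omega⟩, ⟨k-1, by omega⟩)} : Finset (Fin k × Fin k)) ⊆
        Finset.univ.filter (fun p : Fin k × Fin k => p.1 < p.2) :=
      Finset.insert_subset_iff.mpr ⟨hmem0, Finset.singleton_subset_iff.mpr hmem1⟩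
    show fDef μ n k Y ≤ min (c * x default) 1 ^ 2
    unfold fDef
    calc ∏ p ∈ Finset.univ.filter (fun p : Fin k × Fin k => p.1 < p.2),
          min (Y p.1 * Y p.2 / (μ * n)) 1
        = (∏ p ∈ (Finset.univ.filter (fun p : Fin k × Fin k => p.1 < p.2)) \
              ({(⟨0, by omega⟩, ⟨k-1, by omega⟩),
                (⟨1, by omega⟩, ⟨k-1, by omega⟩)} : Finset (Fin k × Fin k)),
            min (Y p.1 * Y p.2 / (μ * n)) 1) *
          ∏ p ∈ ({(⟨0, by omega⟩, ⟨k-1, by omega⟩),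
                (⟨1, by omega⟩, ⟨k-1, by omega⟩)} : Finset (Fin k × Fin k)),
            min (Y p.1 * Y p.2 / (μ * n)) 1 := (Finset.prod_sdiff hTsub).symm
      _ ≤ 1 * ∏ p ∈ ({(⟨0, by omega⟩, ⟨k-1, by omega⟩),
                (⟨1, by omega⟩, ⟨k-1, by omega⟩)} : Finset (Fin k × Fin k)),
            min (Y p.1 * Y p.2 / (μ * n)) 1 :=
          mul_le_mul_of_nonneg_right
            (Finset.prod_le_one (fun p _ => hfac0 p) (fun p _ => hfac1 p))
            (Finset.prod_nonneg (fun p _ => hfac0 p))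
      _ = min (Y ⟨0, by omega⟩ * Y ⟨k-1, by omega⟩ / (μ * n)) 1 *
            min (Y ⟨1, by omega⟩ * Y ⟨k-1, by omega⟩ / (μ * n)) 1 := by
          rw [one_mul, Finset.prod_pair hne]
      _ ≤ min (c * x default) 1 * min (c * x default) 1 := by
          rw [hY0, hY1', hYlast]
          refine mul_le_mul (hg _) (hg _) ?_ ?_
          · exact le_min (div_nonneg (mul_nonneg (le_trans zero_le_one (hbval _ n))
              hxd0) hμn.le) zero_le_one
          · exact le_min (mul_nonneg hc0.le hxd0) zero_le_one
      _ = min (c * x default) 1 ^ 2 := (sq _).symm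
  -- integrability of the comparison function
  have hφcont : Continuous fun y : ℝ => min (c * y) 1 ^ 2 :=
    ((continuous_const.mul continuous_id).min continuous_const).pow 2
  have hφint : Integrable (fun y : ℝ => min (c * y) 1 ^ 2) ν := by
    refine Integrable.mono' (integrable_const 1) hφcont.aestronglyMeasurable ?_
    filter_upwards [hae1] with y hy
    have h0 : 0 ≤ min (c * y) 1 := le_min (mul_nonneg hc0.le (by linarith)) zero_le_one
    rw [Real.norm_eq_abs, abs_of_nonneg (sq_nonneg _)]
    exact pow_le_one₀ h0 (min_le_right _ _)
  have mp := measurePreserving_funUnique ν (Fin (k - (k-1)))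
  have hgint : Integrable (fun x : Fin (k - (k-1)) → ℝ => min (c * x default) 1 ^ 2) π := by
    rw [← hpieq]
    exact (mp.integrable_comp_emb
      (MeasurableEquiv.funUnique (Fin (k - (k-1))) ℝ).measurableEmbedding).mpr hφint
  -- nonnegativity of SB
  have hSBeq : SB ν μ k (k-1) (fun i => b i n) n =
      ∫ x in S, fDef μ n k (fun i =>
        if hlt : i.val < k - 1 then b ⟨i.val, hlt⟩ n
        else x ⟨i.val - (k - 1), by have := i.isLt; omega⟩) ∂π := rfl
  have hSBnn : 0 ≤ SB ν μ k (k-1) (fun i => b i n) n := by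
    rw [hSBeq]
    exact setIntegral_nonneg hSmeas hF0
  rw [abs_of_nonneg hSBnn, hSBeq]
  calc (∫ x in S, fDef μ n k (fun i =>
          if hlt : i.val < k - 1 then b ⟨i.val, hlt⟩ n
          else x ⟨i.val - (k - 1), by have := i.isLt; omega⟩) ∂π)
      ≤ ∫ x in S, min (c * x default) 1 ^ 2 ∂π := by
        refine integral_mono_of_nonneg ?_ hgint.restrict ?_
        · exact ae_restrict_of_forall_mem hSmeas hF0
        · exact ae_restrict_of_forall_mem hSmeas hFle
    _ ≤ ∫ x, min (c * x default) 1 ^ 2 ∂π :=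
        setIntegral_le_integral hgint (Eventually.of_forall fun x => sq_nonneg _)
    _ = ∫ y, min (c * y) 1 ^ 2 ∂ν := by
        rw [← hpieq]
        exact mp.integral_comp' (fun y => min (c * y) 1 ^ 2)
    _ ≤ (C' ^ (2/α) + C' / (1 - α/2)) * c ^ α :=
        key_tail_bound α hα1 hα2 ν hsupp C' hC' htail' c hc0 hc1
    _ ≤ D / μ ^ α * (B / n) ^ α := by
        have hceq : c = (B / n) / μ := by
          rw [hcdef, div_div, mul_comm]
        rw [hceq, Real.div_rpow (div_nonneg (by linarith) hn0.le) hμ0.le, hDdef]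
        exact le_of_eq (by ring)
end
end

section
/- Fix k ≥ 3, two distinct vertices i and j, and ε > 0. There exists c_1 > 0 such that for every sequence L = L(n) with L(n) > n^{(2−α)(k−2)/2 + ε} and all sufficiently large n, P( the pair {i,j} is an edge of G_n contained in at least L(n) k-cliques of G_n | W_i W_j < μ n ) ≤ exp( − c_1 · L(n)^{1/(k−2)} ). -/
open MeasureTheory Filter Set

noncomputable section

/-- Conditionally on the weights `w`, the IRG edge indicators: the pair `{i,j}` (with
`i < j`, coordinates with `i ≥ j` are irrelevant) is an edge with probability
`min(w_i w_j/(μ n), 1)`, independently over pairs. -/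
def edgeM (μ : ℝ) (n : ℕ) (w : Fin n → ℝ) : Measure (Fin n × Fin n → Bool) :=
  Measure.pi fun p : Fin n × Fin n =>
    (PMF.bernoulli (Real.toNNReal (min (w p.1 * w p.2 / (μ * n)) 1))
      ((Real.toNNReal_le_toNNReal (min_le_right _ _)).trans_eq Real.toNNReal_one)).toMeasure

/-- The joint law of the i.i.d. weights and the conditionally independent edges. -/
def jointM (ν : Measure ℝ) (μ : ℝ) (n : ℕ) :
    Measure ((Fin n → ℝ) × (Fin n × Fin n → Bool)) :=
  (Measure.pi fun _ : Fin n => ν).bind fun w => (edgeM μ n w).map (Prod.mk w)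

/-- Adjacency of `u` and `v` in the graph encoded by `η`. -/
def adjB {n : ℕ} (η : Fin n × Fin n → Bool) (u v : Fin n) : Bool :=
  if u < v then η (u, v) else η (v, u)

/-- The number of `k`-cliques containing both `u` and `v`. -/
def cliquesThrough (k : ℕ) {n : ℕ} (η : Fin n × Fin n → Bool) (u v : Fin n) : ℕ :=
  ((Finset.powersetCard k (Finset.univ : Finset (Fin n))).filter
    (fun S => u ∈ S ∧ v ∈ S ∧ ∀ a ∈ S, ∀ b ∈ S, a < b → η (a, b) = true)).card

/-!
Every `k`-clique through `{i, j}` consists of `i`, `j` and `k - 2` common neighbours, so the event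
forces at least `m = ⌈L^{1/(k-2)}⌉` common neighbours. Given the weights, a fixed set `T` of other
vertices consists of common neighbours with probability `∏_{l ∈ T} p_{il} p_{jl}`, where
`p_{il} = min (W_i W_l / (μ n)) 1`; on `W_i W_j < μ n` each factor is at most
`min (W_l² / (μ n)) 1`. Averaging over the i.i.d. weights, the union bound over `T` gives at most
`C(n, m) q^m` with `q = E min (W² / (μ n)) 1 ≤ E[W^γ] (μ n)^{-γ/2}` for any `γ < α`, a moment that
is finite by the tail assumption. As `n q = O(n^{1-γ/2})` is much smaller than
`m ≥ n^{(2-α)/2 + ε/(k-2)}`, the bound `C(n, m) q^m ≤ (e n q / m)^m` is at most `e^{-2m}`, and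
conditioning on an event of probability at least `1/2` costs only a factor `2`.
-/

open scoped ENNReal
open Topology
open Finset (powersetCard)

section RandomGraph

variable {μ : ℝ} {n : ℕ}

def edgeProb (μ : ℝ) (n : ℕ) (w : Fin n → ℝ) (a b : Fin n) : ℝ≥0∞ :=
  ENNReal.ofReal (min (w a * w b / (μ * n)) 1)

lemma edgeProb_comm (w : Fin n → ℝ) (a b : Fin n) : edgeProb μ n w a b = edgeProb μ n w b a := by
  rw [edgeProb, edgeProb, mul_comm]

instance (w : Fin n → ℝ) : IsProbabilityMeasure (edgeM μ n w) := by
  unfold edgeM; infer_instance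

lemma edgeM_singleton (w : Fin n → ℝ) (η : Fin n × Fin n → Bool) :
    edgeM μ n w {η} = ∏ p, cond (η p) (edgeProb μ n w p.1 p.2) (1 - edgeProb μ n w p.1 p.2) := by
  rw [edgeM, ← Set.univ_pi_singleton, Measure.pi_pi]
  refine Finset.prod_congr rfl fun p _ => ?_
  rw [PMF.toMeasure_apply_singleton _ _ (measurableSet_singleton _)]
  cases η p
  · exact ENNReal.coe_sub
  · rfl

lemma edgeM_forall_eq_true (w : Fin n → ℝ) (S : Finset (Fin n × Fin n)) :
    edgeM μ n w {η | ∀ p ∈ S, η p = true} = ∏ p ∈ S, edgeProb μ n w p.1 p.2 := by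
  classical
  have hpi : {η : Fin n × Fin n → Bool | ∀ p ∈ S, η p = true} =
      Set.univ.pi fun p => if p ∈ S then {true} else Set.univ := by
    ext η
    simp only [Set.mem_ofPred_eq, Set.mem_pi, Set.mem_univ, true_implies]
    refine forall_congr' fun p => ?_
    by_cases hp : p ∈ S <;> simp [hp]
  rw [hpi, edgeM, Measure.pi_pi]
  calc _ = ∏ p, if p ∈ S then edgeProb μ n w p.1 p.2 else 1 := by
        refine Finset.prod_congr rfl fun p _ => ?_
        split_ifs
        · exact PMF.toMeasure_apply_singleton _ _ (measurableSet_singleton _)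
        · exact measure_univ
    _ = _ := by rw [Finset.prod_ite_mem, Finset.univ_inter]

lemma measurable_edgeM_map (μ : ℝ) (n : ℕ) :
    Measurable fun w : Fin n → ℝ => (edgeM μ n w).map (Prod.mk w) := by
  classical
  refine Measure.measurable_of_measurable_coe _ fun s hs => ?_
  have hsum : ∀ w : Fin n → ℝ, edgeM μ n w (Prod.mk w ⁻¹' s) =
      ∑ η, Set.indicator {w | (w, η) ∈ s} (fun w => edgeM μ n w {η}) w := by
    intro w
    have : Prod.mk w ⁻¹' s = ↑(Finset.univ.filter fun η => (w, η) ∈ s) := by ext; simp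
    rw [this, ← sum_measure_singleton, Finset.sum_filter]
    simp only [Set.indicator, Set.mem_ofPred_eq]
  simp_rw [Measure.map_apply measurable_prodMk_left hs, hsum, edgeM_singleton, edgeProb]
  refine Finset.measurable_sum _ fun η _ => Measurable.indicator ?_ (measurable_prodMk_right hs)
  refine Finset.measurable_prod _ fun p _ => ?_
  cases η p <;> simp only [cond] <;> fun_prop

lemma jointM_apply (ν : Measure ℝ) {A : Set ((Fin n → ℝ) × (Fin n × Fin n → Bool))}
    (hA : MeasurableSet A) :
    jointM ν μ n A = ∫⁻ w, edgeM μ n w (Prod.mk w ⁻¹' A) ∂Measure.pi fun _ => ν := by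
  rw [jointM, Measure.bind_apply hA (measurable_edgeM_map μ n).aemeasurable]
  simp_rw [Measure.map_apply measurable_prodMk_left hA]

lemma jointM_fst_preimage (ν : Measure ℝ) {B : Set (Fin n → ℝ)} (hB : MeasurableSet B) :
    jointM ν μ n (Prod.fst ⁻¹' B) = Measure.pi (fun _ => ν) B := by
  classical
  rw [jointM_apply ν (measurable_fst hB), ← lintegral_indicator_one hB]
  refine lintegral_congr fun w => ?_
  by_cases hw : w ∈ B <;> simp [hw, Set.preimage]

end RandomGraph

section Cliques

variable {n : ℕ}

def sortPair (u v : Fin n) : Fin n × Fin n := if u < v then (u, v) else (v, u)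

lemma adjB_eq_sortPair (η : Fin n × Fin n → Bool) (u v : Fin n) :
    adjB η u v = η (sortPair u v) := by
  unfold adjB sortPair; split <;> rfl

lemma sortPair_inj {u l l' : Fin n} (hl : l ≠ u)
    (h : sortPair u l = sortPair u l') : l = l' := by
  unfold sortPair at h
  split at h <;> split at h <;> simp only [Prod.mk.injEq] at h <;> tauto

lemma sortPair_ne {u v l l' : Fin n} (huv : u ≠ v) (hl' : l' ≠ u) :
    sortPair u l ≠ sortPair v l' := by
  unfold sortPair
  split <;> split <;> simp only [ne_eq, Prod.mk.injEq] <;> tauto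

lemma edgeProb_sortPair {μ : ℝ} (w : Fin n → ℝ) (u l : Fin n) :
    edgeProb μ n w (sortPair u l).1 (sortPair u l).2 = edgeProb μ n w u l := by
  unfold sortPair; split
  · rfl
  · exact edgeProb_comm w l u

lemma edgeM_forall_adjB (μ : ℝ) (w : Fin n → ℝ) {u v : Fin n} (huv : u ≠ v)
    {T : Finset (Fin n)} (hT : ∀ l ∈ T, l ≠ u ∧ l ≠ v) :
    edgeM μ n w {η | ∀ l ∈ T, adjB η u l = true ∧ adjB η v l = true} =
      ∏ l ∈ T, edgeProb μ n w u l * edgeProb μ n w v l := by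
  classical
  have hset : {η : Fin n × Fin n → Bool | ∀ l ∈ T, adjB η u l = true ∧ adjB η v l = true} =
      {η | ∀ p ∈ T.image (sortPair u) ∪ T.image (sortPair v), η p = true} := by
    ext η
    simp [adjB_eq_sortPair, forall_and, or_imp]
  have hdisj : Disjoint (T.image (sortPair u)) (T.image (sortPair v)) := by
    simp only [Finset.disjoint_left, Finset.mem_image]
    rintro _ ⟨l, -, rfl⟩ ⟨l', hl', he⟩
    exact sortPair_ne huv (hT l' hl').1 he.symm
  rw [hset, edgeM_forall_eq_true, Finset.prod_union hdisj,
    Finset.prod_image fun l hl _ _ => sortPair_inj (hT l hl).1,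
    Finset.prod_image fun l hl _ _ => sortPair_inj (hT l hl).2,
    ← Finset.prod_mul_distrib]
  simp only [edgeProb_sortPair]

def commonNbrs (η : Fin n × Fin n → Bool) (u v : Fin n) : Finset (Fin n) :=
  ((Finset.univ.erase u).erase v).filter fun l => adjB η u l = true ∧ adjB η v l = true

lemma adjB_of_clique {η : Fin n × Fin n → Bool} {S : Finset (Fin n)}
    (hS : ∀ a ∈ S, ∀ b ∈ S, a < b → η (a, b) = true) {u l : Fin n} (hu : u ∈ S) (hl : l ∈ S)
    (hne : u ≠ l) : adjB η u l = true := by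
  unfold adjB
  split_ifs with h
  · exact hS u hu l hl h
  · exact hS l hl u hu (lt_of_le_of_ne (not_lt.1 h) hne.symm)

lemma cliquesThrough_le_choose (k : ℕ) (η : Fin n × Fin n → Bool) {u v : Fin n} (huv : u ≠ v) :
    cliquesThrough k η u v ≤ (commonNbrs η u v).card.choose (k - 2) := by
  classical
  rw [← Finset.card_powersetCard]
  refine (Finset.card_le_card fun S hS => ?_).trans
    (Finset.card_image_le (f := fun T => insert u (insert v T)))
  simp only [Finset.mem_filter, Finset.mem_powersetCard] at hS
  obtain ⟨⟨-, hcard⟩, hu, hv, hS⟩ := hS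
  have hvu : v ∈ S.erase u := Finset.mem_erase.2 ⟨huv.symm, hv⟩
  refine Finset.mem_image.2 ⟨(S.erase u).erase v, Finset.mem_powersetCard.2 ⟨?_, ?_⟩, ?_⟩
  · intro l hl
    obtain ⟨hlv, hlu, hlS⟩ : l ≠ v ∧ l ≠ u ∧ l ∈ S := by simpa using hl
    simp only [commonNbrs, Finset.mem_filter, Finset.mem_erase, Finset.mem_univ]
    exact ⟨⟨hlv, hlu, trivial⟩, adjB_of_clique hS hu hlS hlu.symm,
      adjB_of_clique hS hv hlS hlv.symm⟩
  · rw [Finset.card_erase_of_mem hvu, Finset.card_erase_of_mem hu, hcard]; rfl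
  · rw [Finset.insert_erase hvu, Finset.insert_erase hu]

lemma rpow_le_card_commonNbrs {k : ℕ} (hk : 3 ≤ k) {η : Fin n × Fin n → Bool} {u v : Fin n}
    (huv : u ≠ v) {ℓ : ℝ} (hℓ : 0 ≤ ℓ) (h : ℓ ≤ cliquesThrough k η u v) :
    ℓ ^ (1 / ((k : ℝ) - 2)) ≤ (commonNbrs η u v).card := by
  have hk2 : (k : ℝ) - 2 = ((k - 2 : ℕ) : ℝ) := by
    rw [Nat.cast_sub (by omega)]; norm_num
  rw [one_div, hk2, Real.rpow_inv_le_iff_of_pos hℓ (Nat.cast_nonneg _)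
    (Nat.cast_pos.2 (by omega)), Real.rpow_natCast]
  exact h.trans (by exact_mod_cast (cliquesThrough_le_choose k η huv).trans (Nat.choose_le_pow _ _))

lemma edgeM_le_card_commonNbrs (μ : ℝ) (w : Fin n → ℝ) {u v : Fin n} (huv : u ≠ v) (m : ℕ) :
    edgeM μ n w {η | m ≤ (commonNbrs η u v).card} ≤
      ∑ T ∈ powersetCard m ((Finset.univ.erase u).erase v),
        ∏ l ∈ T, edgeProb μ n w u l * edgeProb μ n w v l := by
  have hsub : {η | m ≤ (commonNbrs η u v).card} ⊆
      ⋃ T ∈ powersetCard m ((Finset.univ.erase u).erase v),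
        {η | ∀ l ∈ T, adjB η u l = true ∧ adjB η v l = true} := by
    intro η hη
    obtain ⟨T, hT, hTcard⟩ := Finset.exists_subset_card_eq hη
    refine Set.mem_biUnion (Finset.mem_powersetCard.2 ⟨hT.trans (Finset.filter_subset _ _),
      hTcard⟩) fun l hl => (Finset.mem_filter.1 (hT hl)).2
  refine (measure_mono hsub).trans ((measure_biUnion_finset_le _ _).trans
    (Finset.sum_le_sum fun T hT => (edgeM_forall_adjB μ w huv fun l hl => ?_).le))
  have := (Finset.mem_powersetCard.1 hT).1 hl
  simp only [Finset.mem_erase] at this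
  exact ⟨this.2.1, this.1⟩

end Cliques

section Integration

lemma ae_pi_forall {ι X : Type*} [Fintype ι] [MeasurableSpace X] {ν : Measure X}
    [IsProbabilityMeasure ν] {P : X → Prop} (h : ∀ᵐ x ∂ν, P x) :
    ∀ᵐ w ∂Measure.pi (fun _ : ι => ν), ∀ c, P (w c) :=
  ae_all_iff.2 fun _ => Measure.tendsto_eval_ae_ae.eventually h

lemma lintegral_prod_comp_eval {ι X : Type*} [Fintype ι] [MeasurableSpace X] (ν : Measure X)
    [IsProbabilityMeasure ν] {g : X → ℝ≥0∞} (hg : Measurable g) (T : Finset ι) :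
    ∫⁻ w, ∏ l ∈ T, g (w l) ∂Measure.pi (fun _ => ν) = (∫⁻ x, g x ∂ν) ^ T.card := by
  calc ∫⁻ w, ∏ l ∈ T, g (w l) ∂Measure.pi (fun _ => ν)
      = ∏ l ∈ T, ∫⁻ w, g (w l) ∂Measure.pi (fun _ => ν) :=
        ProbabilityTheory.lintegral_prod_eq_prod_lintegral_of_indepFun T
          (fun l (w : ι → X) => g (w l))
          (ProbabilityTheory.iIndepFun_pi fun _ => hg.aemeasurable)
          fun l => hg.comp (measurable_pi_apply l)
    _ = (∫⁻ x, g x ∂ν) ^ T.card := by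
        simp_rw [(measurePreserving_eval (fun _ => ν) _).lintegral_comp hg]
        exact Finset.prod_const _

lemma min_mul_min_le {p q : ℝ} (hp : 0 ≤ p) (hq : 0 ≤ q) :
    min p 1 * min q 1 ≤ min (p * q) 1 :=
  le_min (mul_le_mul (min_le_left _ _) (min_le_left _ _) (le_min hq zero_le_one) hp)
    (mul_le_one₀ (min_le_right _ _) (le_min hq zero_le_one) (min_le_right _ _))

lemma edgeProb_mul_edgeProb_le {μ : ℝ} {n : ℕ} {w : Fin n → ℝ} (hw : ∀ c, 0 ≤ w c)
    (hμn : 0 < μ * n) {u v : Fin n} (huv : w u * w v ≤ μ * n) (l : Fin n) :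
    edgeProb μ n w u l * edgeProb μ n w v l ≤ ENNReal.ofReal (min (w l ^ 2 / (μ * n)) 1) := by
  have hu := hw u; have hv := hw v; have hl := hw l
  rw [edgeProb, edgeProb, ← ENNReal.ofReal_mul (by positivity)]
  refine ENNReal.ofReal_le_ofReal ((min_mul_min_le (by positivity) (by positivity)).trans
    (min_le_min_right _ ?_))
  calc w u * w l / (μ * n) * (w v * w l / (μ * n))
      = w l ^ 2 / (μ * n) * (w u * w v / (μ * n)) := by ring
    _ ≤ w l ^ 2 / (μ * n) :=
        mul_le_of_le_one_right (by positivity) ((div_le_one hμn).2 huv)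

lemma edgeM_preimage_inter_le {μ : ℝ} {n : ℕ} {w : Fin n → ℝ} (hw : ∀ c, 0 ≤ w c)
    (hμn : 0 < μ * n) {u v : Fin n} (huv : u ≠ v) (m : ℕ) :
    edgeM μ n w (Prod.mk w ⁻¹' ({p | p.1 u * p.1 v < μ * n} ∩
        {p | m ≤ (commonNbrs p.2 u v).card})) ≤
      ∑ T ∈ powersetCard m ((Finset.univ.erase u).erase v),
        ∏ l ∈ T, ENNReal.ofReal (min (w l ^ 2 / (μ * n)) 1) := by
  by_cases hwuv : w u * w v < μ * n
  · exact (measure_mono fun η hη => hη.2).trans ((edgeM_le_card_commonNbrs μ w huv m).trans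
      (Finset.sum_le_sum fun T _ => Finset.prod_le_prod' fun l _ =>
        edgeProb_mul_edgeProb_le hw hμn hwuv.le l))
  · have hempty : Prod.mk w ⁻¹' ({p | p.1 u * p.1 v < μ * n} ∩
        {p | m ≤ (commonNbrs p.2 u v).card}) = ∅ :=
      eq_empty_of_forall_notMem fun η hη => hwuv hη.1
    rw [hempty, measure_empty]
    exact bot_le

lemma jointM_inter_card_commonNbrs_le (ν : Measure ℝ) [IsProbabilityMeasure ν]
    (h0 : ∀ᵐ x ∂ν, 0 ≤ x) {μ : ℝ} {n : ℕ} (hμn : 0 < μ * n) {u v : Fin n} (huv : u ≠ v)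
    (m : ℕ) :
    jointM ν μ n ({p | p.1 u * p.1 v < μ * n} ∩ {p | m ≤ (commonNbrs p.2 u v).card}) ≤
      n.choose m * (∫⁻ x, ENNReal.ofReal (min (x ^ 2 / (μ * n)) 1) ∂ν) ^ m := by
  set φ : ℝ → ℝ≥0∞ := fun x => ENNReal.ofReal (min (x ^ 2 / (μ * n)) 1)
  set N := (Finset.univ.erase u).erase v
  have hφ : Measurable φ := by fun_prop
  have hA : MeasurableSet
      ({p | p.1 u * p.1 v < μ * n} ∩ {p | m ≤ (commonNbrs p.2 u v).card} :
        Set ((Fin n → ℝ) × (Fin n × Fin n → Bool))) :=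
    (measurableSet_lt (by fun_prop) measurable_const).inter (measurable_snd
      (Set.to_countable {η : Fin n × Fin n → Bool | m ≤ (commonNbrs η u v).card}).measurableSet)
  rw [jointM_apply ν hA]
  calc _ ≤ ∫⁻ w, ∑ T ∈ powersetCard m N, ∏ l ∈ T, φ (w l) ∂Measure.pi (fun _ => ν) :=
        lintegral_mono_ae ((ae_pi_forall h0).mono fun w hw =>
          edgeM_preimage_inter_le hw hμn huv m)
    _ = ∑ T ∈ powersetCard m N, (∫⁻ x, φ x ∂ν) ^ m := by
        rw [lintegral_finsetSum]
        · refine Finset.sum_congr rfl fun T hT => ?_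
          rw [lintegral_prod_comp_eval ν hφ T, (Finset.mem_powersetCard.1 hT).2]
        · exact fun T _ => Finset.measurable_prod _ fun l _ => hφ.comp (measurable_pi_apply l)
    _ ≤ n.choose m * (∫⁻ x, φ x ∂ν) ^ m := by
        rw [Finset.sum_const, Finset.card_powersetCard, nsmul_eq_mul]
        gcongr
        exact (Finset.card_le_univ N).trans (Fintype.card_fin n).le

end Integration

section Weights

lemma min_one_le_rpow {y β : ℝ} (hy : 0 ≤ y) (hβ0 : 0 < β) (hβ1 : β ≤ 1) : min y 1 ≤ y ^ β := by
  rcases le_or_gt y 1 with h | h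
  · exact (min_le_left _ _).trans (Real.self_le_rpow_of_le_one hy h hβ1)
  · exact (min_le_right _ _).trans (Real.one_le_rpow h.le hβ0.le)

lemma lintegral_min_sq_div_le {ν : Measure ℝ} (h0 : ∀ᵐ x ∂ν, 0 ≤ x) {s γ : ℝ} (hs : 0 < s)
    (hγ0 : 0 < γ) (hγ2 : γ ≤ 2) :
    ∫⁻ x, ENNReal.ofReal (min (x ^ 2 / s) 1) ∂ν ≤
      ENNReal.ofReal (s ^ (-(γ / 2))) * ∫⁻ x, ENNReal.ofReal (x ^ γ) ∂ν := by
  rw [← lintegral_const_mul' _ _ ENNReal.ofReal_ne_top]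
  refine lintegral_mono_ae (h0.mono fun x hx => ?_)
  rw [← ENNReal.ofReal_mul (by positivity)]
  refine ENNReal.ofReal_le_ofReal
    ((min_one_le_rpow (β := γ / 2) (by positivity) (by positivity) (by linarith)).trans_eq ?_)
  rw [Real.div_rpow (by positivity) hs.le, ← Real.rpow_natCast x 2, ← Real.rpow_mul hx,
    Real.rpow_neg hs.le, div_eq_inv_mul]
  norm_num [mul_div_cancel₀]

lemma lintegral_ofReal_rpow_lt_top {ν : Measure ℝ} [IsFiniteMeasure ν] (h0 : ∀ᵐ x ∂ν, 0 ≤ x)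
    {α γ C : ℝ} (hγ : 0 < γ) (hγα : γ < α)
    (htail : ∀ᶠ x in atTop, ν (Ioi x) ≤ ENNReal.ofReal (C * x ^ (-α))) :
    ∫⁻ x, ENNReal.ofReal (x ^ γ) ∂ν < ∞ := by
  obtain ⟨x₀, hx₀⟩ := (htail.and (eventually_gt_atTop 0)).exists_forall_of_atTop
  have hx₀0 : 0 < x₀ := (hx₀ x₀ le_rfl).2
  rw [lintegral_rpow_eq_lintegral_meas_lt_mul ν h0 aemeasurable_id hγ]
  refine ENNReal.mul_lt_top ENNReal.ofReal_lt_top ?_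
  rw [← Ioc_union_Ioi_eq_Ioi hx₀0.le, lintegral_union measurableSet_Ioi (Ioc_disjoint_Ioi le_rfl)]
  refine ENNReal.add_lt_top.2 ⟨?_, ?_⟩
  · have hint : IntegrableOn (fun t : ℝ => t ^ (γ - 1)) (Ioc 0 x₀) :=
      (intervalIntegrable_iff_integrableOn_Ioc_of_le hx₀0.le).1
        (intervalIntegral.intervalIntegrable_rpow' (by linarith))
    calc ∫⁻ t in Ioc 0 x₀, ν {a | t < id a} * ENNReal.ofReal (t ^ (γ - 1))
        ≤ ∫⁻ t in Ioc 0 x₀, ν univ * ENNReal.ofReal (t ^ (γ - 1)) := by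
          gcongr; exact subset_univ _
      _ < ∞ := by
          rw [lintegral_const_mul' _ _ (measure_ne_top ν _)]
          exact ENNReal.mul_lt_top (measure_lt_top ν _) hint.lintegral_lt_top
  · have hint : IntegrableOn (fun t : ℝ => C * t ^ (γ - 1 - α)) (Ioi x₀) :=
      (integrableOn_Ioi_rpow_of_lt (by linarith) hx₀0).const_mul C
    refine lt_of_le_of_lt (setLIntegral_mono' measurableSet_Ioi fun t ht => ?_)
      hint.lintegral_lt_top
    have ht0 : 0 < t := hx₀0.trans ht
    calc ν {a | t < id a} * ENNReal.ofReal (t ^ (γ - 1))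
        ≤ ENNReal.ofReal (C * t ^ (-α)) * ENNReal.ofReal (t ^ (γ - 1)) :=
          mul_le_mul_left (hx₀ t (le_of_lt ht)).1 _
      _ = ENNReal.ofReal (C * t ^ (γ - 1 - α)) := by
          rw [← ENNReal.ofReal_mul' (by positivity), mul_assoc, ← Real.rpow_add ht0]
          ring_nf

lemma eventually_measure_Ioi_le {ν : Measure ℝ} [IsFiniteMeasure ν] {α : ℝ}
    (htail : Tendsto (fun x : ℝ => x ^ α * (ν (Ioi x)).toReal) atTop (𝓝 1)) :
    ∀ᶠ x in atTop, ν (Ioi x) ≤ ENNReal.ofReal (2 * x ^ (-α)) := by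
  filter_upwards [htail.eventually (eventually_le_nhds one_lt_two), eventually_gt_atTop 0]
    with x hx hx0
  rw [← ENNReal.ofReal_toReal (measure_ne_top ν _), Real.rpow_neg hx0.le, ← div_eq_mul_inv]
  exact ENNReal.ofReal_le_ofReal ((le_div_iff₀' (by positivity)).2 hx)

lemma exists_lintegral_min_sq_div_le {ν : Measure ℝ} [IsFiniteMeasure ν]
    (h0 : ∀ᵐ x ∂ν, 0 ≤ x) {α γ : ℝ} (hγ0 : 0 < γ) (hγα : γ < α) (hγ2 : γ ≤ 2)
    (htail : Tendsto (fun x : ℝ => x ^ α * (ν (Ioi x)).toReal) atTop (𝓝 1)) :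
    ∃ M, 0 ≤ M ∧ ∀ s, 0 < s →
      ∫⁻ x, ENNReal.ofReal (min (x ^ 2 / s) 1) ∂ν ≤ ENNReal.ofReal (s ^ (-(γ / 2)) * M) := by
  refine ⟨(∫⁻ x, ENNReal.ofReal (x ^ γ) ∂ν).toReal, ENNReal.toReal_nonneg, fun s hs => ?_⟩
  rw [ENNReal.ofReal_mul (Real.rpow_nonneg hs.le _), ENNReal.ofReal_toReal
    (lintegral_ofReal_rpow_lt_top h0 hγ0 hγα (eventually_measure_Ioi_le htail)).ne]
  exact lintegral_min_sq_div_le h0 hs hγ0 hγ2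

lemma tendsto_measure_Ici_atTop (ν : Measure ℝ) [IsFiniteMeasure ν] :
    Tendsto (fun r => ν (Ici r)) atTop (𝓝 0) := by
  have h := tendsto_measure_iInter_atTop (μ := ν) (fun r : ℝ => measurableSet_Ici.nullMeasurableSet)
    (fun r s hrs => Ici_subset_Ici.2 hrs) ⟨0, measure_ne_top ν _⟩
  rwa [show ⋂ r : ℝ, Ici r = ∅ from eq_empty_of_forall_notMem fun x hx =>
    not_le.2 (lt_add_one x) (mem_iInter.1 hx (x + 1)), measure_empty] at h

lemma pi_sq_le_mul_le {ι : Type*} [Fintype ι] {ν : Measure ℝ} [IsProbabilityMeasure ν]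
    (h0 : ∀ᵐ x ∂ν, 0 ≤ x) (r : ℝ) (u v : ι) :
    Measure.pi (fun _ => ν) {w | r ^ 2 ≤ w u * w v} ≤ 2 * ν (Ici r) := by
  have hsub : {w : ι → ℝ | r ^ 2 ≤ w u * w v} ≤ᵐ[Measure.pi fun _ => ν]
      (Function.eval u ⁻¹' Ici r ∪ Function.eval v ⁻¹' Ici r : Set (ι → ℝ)) := by
    filter_upwards [ae_pi_forall h0] with w hw hr
    change r ^ 2 ≤ w u * w v at hr
    change r ≤ w u ∨ r ≤ w v
    by_contra! hne
    exact (mul_lt_mul'' hne.1 hne.2 (hw u) (hw v)).not_ge (sq r ▸ hr)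
  calc _ ≤ _ := measure_mono_ae hsub
    _ ≤ _ := measure_union_le _ _
    _ = 2 * ν (Ici r) := by
        rw [(measurePreserving_eval _ u).measure_preimage measurableSet_Ici.nullMeasurableSet,
          (measurePreserving_eval _ v).measure_preimage measurableSet_Ici.nullMeasurableSet,
          two_mul]

lemma eventually_half_le_pi_mul_lt {ν : Measure ℝ} [IsProbabilityMeasure ν]
    (h0 : ∀ᵐ x ∂ν, 0 ≤ x) {μ : ℝ} (hμ : 0 < μ) :
    ∀ᶠ n : ℕ in atTop, ∀ u v : Fin n, 2⁻¹ ≤ Measure.pi (fun _ => ν) {w | w u * w v < μ * n} := by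
  have hr : Tendsto (fun n : ℕ => Real.sqrt (μ * n)) atTop atTop :=
    Real.tendsto_sqrt_atTop.comp (tendsto_natCast_atTop_atTop.const_mul_atTop hμ)
  filter_upwards [hr.eventually ((tendsto_measure_Ici_atTop ν).eventually
    (eventually_le_nhds (by norm_num : (0 : ℝ≥0∞) < 4⁻¹)))] with n hn u v
  have hc : {w : Fin n → ℝ | w u * w v < μ * n} =
      {w | Real.sqrt (μ * n) ^ 2 ≤ w u * w v}ᶜ := by
    ext
    simp only [mem_ofPred_eq, mem_compl_iff, not_le, Real.sq_sqrt (by positivity : 0 ≤ μ * n)]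
  rw [hc, prob_compl_eq_one_sub (measurableSet_le measurable_const (by fun_prop))]
  calc (2⁻¹ : ℝ≥0∞) = 1 - 2 * 4⁻¹ := by
        rw [show (4 : ℝ≥0∞) = 2 * 2 by norm_num, ENNReal.mul_inv (by simp) (by simp), ← mul_assoc,
          ENNReal.mul_inv_cancel (by simp) (by simp), one_mul, ENNReal.one_sub_inv_two]
    _ ≤ 1 - 2 * ν (Ici (Real.sqrt (μ * n))) := by gcongr
    _ ≤ _ := tsub_le_tsub_left (pi_sq_le_mul_le h0 _ u v) 1

end Weights

lemma two_mul_choose_mul_pow_le_exp {n m : ℕ} {q : ℝ} (hq : 0 ≤ q) (hm : 1 ≤ m)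
    (hnq : Real.exp 3 * (n * q) ≤ m) :
    2 * n.choose m * q ^ m ≤ Real.exp (-m) := by
  have hm0 : (0 : ℝ) < m := by exact_mod_cast hm
  have hratio : n * q / m ≤ Real.exp (-3) := by
    rw [div_le_iff₀ hm0, Real.exp_neg, inv_mul_eq_div, le_div_iff₀' (Real.exp_pos 3)]
    exact hnq
  have hpow : (n * q) ^ m / m.factorial ≤ Real.exp (-(2 * m)) :=
    calc (n * q) ^ m / m.factorial = (n * q / m) ^ m * ((m : ℝ) ^ m / m.factorial) := by
          rw [div_pow, ← mul_div_assoc, div_mul_cancel₀ _ (pow_ne_zero _ hm0.ne')]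
      _ ≤ Real.exp (-3) ^ m * Real.exp m := by
          gcongr
          exact Real.pow_div_factorial_le_exp _ hm0.le m
      _ = Real.exp (-(2 * m)) := by
          rw [← Real.exp_nat_mul, ← Real.exp_add]; ring_nf
  have htwo : 2 ≤ Real.exp m := by
    have : (1 : ℝ) ≤ m := by exact_mod_cast hm
    linarith [Real.add_one_le_exp (m : ℝ)]
  calc 2 * n.choose m * q ^ m ≤ 2 * ((n : ℝ) ^ m / m.factorial) * q ^ m := by
        gcongr; exact Nat.choose_le_pow_div m n
    _ = 2 * ((n * q) ^ m / m.factorial) := by ring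
    _ ≤ Real.exp m * Real.exp (-(2 * m)) := by gcongr
    _ = Real.exp (-m) := by rw [← Real.exp_add]; ring_nf

lemma rpow_div_le_rpow_one_div {x y θ d : ℝ} (hx : 0 ≤ x) (hd : 0 < d) (h : x ^ θ ≤ y) :
    x ^ (θ / d) ≤ y ^ (1 / d) := by
  rw [div_eq_mul_one_div θ, Real.rpow_mul hx]
  exact Real.rpow_le_rpow (by positivity) h (by positivity)

lemma eventually_mul_rpow_le {μ a b : ℝ} (hμ : 0 < μ) (hab : 1 - a < b) (c : ℝ) :
    ∀ᶠ n : ℕ in atTop, c * (n * (μ * n) ^ (-a)) ≤ (n : ℝ) ^ b := by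
  filter_upwards [((tendsto_rpow_atTop (sub_pos.2 hab)).comp
    tendsto_natCast_atTop_atTop).eventually_ge_atTop (c * μ ^ (-a)), eventually_gt_atTop 0]
    with n hn hn0
  have hn0' : (0 : ℝ) < n := by exact_mod_cast hn0
  calc c * (n * (μ * n) ^ (-a)) = c * μ ^ (-a) * (n : ℝ) ^ (1 - a) := by
        rw [Real.mul_rpow hμ.le hn0'.le, sub_eq_add_neg, Real.rpow_add hn0', Real.rpow_one]; ring
    _ ≤ (n : ℝ) ^ (b - (1 - a)) * (n : ℝ) ^ (1 - a) := by gcongr; exact hn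
    _ = (n : ℝ) ^ b := by rw [← Real.rpow_add hn0']; ring_nf

theorem cond_jointM_cliquesThrough_le {ν : Measure ℝ} [IsProbabilityMeasure ν]
    (h0 : ∀ᵐ x ∂ν, 0 ≤ x) {μ : ℝ} {n : ℕ} (hμn : 0 < μ * n) {u v : Fin n} (huv : u ≠ v)
    {k : ℕ} (hk : 3 ≤ k) {ℓ q : ℝ} (hℓ : 1 ≤ ℓ) (hq0 : 0 ≤ q)
    (hq : ∫⁻ x, ENNReal.ofReal (min (x ^ 2 / (μ * n)) 1) ∂ν ≤ ENNReal.ofReal q)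
    (hnq : Real.exp 3 * (n * q) ≤ ℓ ^ (1 / ((k : ℝ) - 2)))
    (hhalf : 2⁻¹ ≤ Measure.pi (fun _ => ν) {w | w u * w v < μ * n}) :
    ProbabilityTheory.cond (jointM ν μ n) {p | p.1 u * p.1 v < μ * n}
        {p | adjB p.2 u v = true ∧ ℓ ≤ (cliquesThrough k p.2 u v : ℝ)} ≤
      ENNReal.ofReal (Real.exp (-(ℓ ^ (1 / ((k : ℝ) - 2))))) := by
  set m := ⌈ℓ ^ (1 / ((k : ℝ) - 2))⌉₊
  have hm : 1 ≤ m := Nat.one_le_iff_ne_zero.2 (Nat.ceil_pos.2 (by positivity)).ne'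
  have hB : MeasurableSet {w : Fin n → ℝ | w u * w v < μ * n} :=
    measurableSet_lt (by fun_prop) measurable_const
  have hsub : {p : (Fin n → ℝ) × _ | p.1 u * p.1 v < μ * n} ∩
      {p | adjB p.2 u v = true ∧ ℓ ≤ (cliquesThrough k p.2 u v : ℝ)} ⊆
      {p | p.1 u * p.1 v < μ * n} ∩ {p | m ≤ (commonNbrs p.2 u v).card} :=
    inter_subset_inter_right _ fun p hp =>
      Nat.ceil_le.2 (rpow_le_card_commonNbrs hk huv (by linarith) hp.2)
  have hs : jointM ν μ n {p | p.1 u * p.1 v < μ * n} =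
      Measure.pi (fun _ => ν) {w | w u * w v < μ * n} := jointM_fst_preimage ν hB
  have hsm : MeasurableSet {p : (Fin n → ℝ) × (Fin n × Fin n → Bool) | p.1 u * p.1 v < μ * n} :=
    measurable_fst hB
  rw [ProbabilityTheory.cond_apply hsm, hs]
  calc _ ≤ 2 * (n.choose m * ENNReal.ofReal q ^ m) :=
        mul_le_mul' (ENNReal.inv_le_iff_inv_le.2 hhalf) ((measure_mono hsub).trans
          ((jointM_inter_card_commonNbrs_le ν h0 hμn huv m).trans (by gcongr)))
    _ = ENNReal.ofReal (2 * n.choose m * q ^ m) := by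
        rw [ENNReal.ofReal_mul (by positivity), ENNReal.ofReal_mul (by positivity),
          ENNReal.ofReal_pow hq0, ENNReal.ofReal_natCast, ENNReal.ofReal_ofNat, mul_assoc]
    _ ≤ ENNReal.ofReal (Real.exp (-(ℓ ^ (1 / ((k : ℝ) - 2))))) := by
        refine ENNReal.ofReal_le_ofReal ((two_mul_choose_mul_pow_le_exp hq0 hm
          (hnq.trans (Nat.le_ceil _))).trans (Real.exp_le_exp.2 (neg_le_neg (Nat.le_ceil _))))

/-- there exists `c₁ > 0` such that for every sequence `L` with
`L(n) > n^{(2-α)(k-2)/2+ε}` and all sufficiently large `n`,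
`P({i,j} is an edge contained in ≥ L(n) k-cliques | W_i W_j < μ n)
  ≤ exp(-c₁ L(n)^{1/(k-2)})`. -/
theorem stmt11
    (α : ℝ) (hα : α ∈ Set.Ioo (1 : ℝ) 2)
    (ν : Measure ℝ) [IsProbabilityMeasure ν]
    (hsupp : ν (Set.Iio 1) = 0)
    (htail : Tendsto (fun x : ℝ => x ^ α * (ν (Set.Ioi x)).toReal) atTop (nhds 1))
    (hint : Integrable (fun x : ℝ => x) ν)
    (μ : ℝ) (hμ : μ = ∫ x, x ∂ν)
    (k : ℕ) (hk : 3 ≤ k)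
    (i j : ℕ) (hij : i ≠ j)
    (ε : ℝ) (hε : 0 < ε) :
    ∃ c₁ : ℝ, 0 < c₁ ∧
      ∀ L : ℕ → ℝ,
        (∀ n : ℕ, (n : ℝ) ^ ((2 - α) * ((k : ℝ) - 2) / 2 + ε) < L n) →
        ∀ᶠ n : ℕ in atTop, ∀ (hi : i < n) (hj : j < n),
          ProbabilityTheory.cond (jointM ν μ n)
              {p | p.1 ⟨i, hi⟩ * p.1 ⟨j, hj⟩ < μ * n}
              {p | adjB p.2 ⟨i, hi⟩ ⟨j, hj⟩ = true ∧
                L n ≤ (cliquesThrough k p.2 ⟨i, hi⟩ ⟨j, hj⟩ : ℝ)} ≤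
            ENNReal.ofReal (Real.exp (-(c₁ * L n ^ (1 / ((k : ℝ) - 2))))) := by
  obtain ⟨hα1, hα2⟩ := hα
  have h1 : ∀ᵐ x ∂ν, 1 ≤ x := by
    rw [ae_iff]; simpa [Iio] using hsupp
  have h0 : ∀ᵐ x ∂ν, 0 ≤ x := h1.mono fun x hx => zero_le_one.trans hx
  have hμ0 : 0 < μ := hμ ▸ one_pos.trans_le
    (by simpa using integral_mono_ae (integrable_const (1 : ℝ)) hint h1)
  have hk2 : (0 : ℝ) < k - 2 := by
    have : (3 : ℝ) ≤ k := by exact_mod_cast hk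
    linarith
  -- `γ < α` keeps `E W^γ` finite; `γ > α - 2ε/(k-2)` makes `n q ≪ n^{(2-α)/2 + ε/(k-2)}`.
  set γ := max (α - ε / ((k : ℝ) - 2)) 1
  have hγα : γ < α := max_lt (by linarith [div_pos hε hk2]) hα1
  have hexp : 1 - γ / 2 < ((2 - α) * ((k : ℝ) - 2) / 2 + ε) / ((k : ℝ) - 2) := by
    rw [show ((2 - α) * ((k : ℝ) - 2) / 2 + ε) / ((k : ℝ) - 2) =
      (2 - α) / 2 + ε / ((k : ℝ) - 2) by field_simp]
    linarith [le_max_left (α - ε / ((k : ℝ) - 2)) 1, div_pos hε hk2]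
  obtain ⟨M, hM0, hM⟩ :=
    exists_lintegral_min_sq_div_le h0 (by positivity) hγα (by linarith) htail
  refine ⟨1, one_pos, fun L hL => ?_⟩
  filter_upwards [eventually_half_le_pi_mul_lt h0 hμ0,
    eventually_mul_rpow_le hμ0 hexp (Real.exp 3 * M), eventually_ge_atTop 1]
    with n hhalf hrate hn hi hj
  have hn1 : (1 : ℝ) ≤ n := by exact_mod_cast hn
  rw [one_mul]
  refine cond_jointM_cliquesThrough_le h0 (by positivity) (fun h => hij (Fin.val_eq_of_eq h)) hk
    ((Real.one_le_rpow hn1 (by nlinarith)).trans (hL n).le)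
    (mul_nonneg (Real.rpow_nonneg (by positivity) _) hM0) (hM _ (by positivity)) ?_ (hhalf _ _)
  calc Real.exp 3 * (n * ((μ * n) ^ (-(γ / 2)) * M))
      = Real.exp 3 * M * (n * (μ * n) ^ (-(γ / 2))) := by ring
    _ ≤ _ := hrate
    _ ≤ _ := rpow_div_le_rpow_one_div (by positivity) hk2 (hL n).le
end
end

section
/- Suppose H satisfies Assumption 1 and 0 < γ ≤ B(H). Then the constraint defining R(H) is feasible and R(H) = 0. -/
open Set

noncomputable section

/-- Symmetric edge weight `min(β_i + β_j - 1, 0)` as a function on unordered pairs. -/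
def edgeMin {k : ℕ} (β : Fin k → ℝ) : Sym2 (Fin k) → ℝ :=
  Sym2.lift ⟨fun i j => min (β i + β j - 1) 0,
    fun i j => by dsimp only; rw [add_comm (β i) (β j)]⟩

/-- The box `[0,1]^k`. -/
def box (k : ℕ) : Set (Fin k → ℝ) := {β | ∀ i, β i ∈ Set.Icc (0 : ℝ) 1}

/-- The objective of the optimization problem defining `B(H)`. -/
def objB (α : ℝ) {k : ℕ} (H : SimpleGraph (Fin k)) [DecidableRel H.Adj]
    (β : Fin k → ℝ) : ℝ :=
  ∑ i, (1 - α * β i) + ∑ e ∈ H.edgeFinset, edgeMin β e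

/-- `B(H) = max_{β ∈ [0,1]^k} Σ_i (1 - αβ_i) + Σ_{{i,j} ∈ E_H} min(β_i + β_j - 1, 0)`. -/
def BH (α : ℝ) {k : ℕ} (H : SimpleGraph (Fin k)) [DecidableRel H.Adj] : ℝ :=
  sSup (objB α H '' box k)

/-- The constraint `Σ_i max(1 - αβ_i, 0) + Σ_{{i,j} ∈ E_H} min(β_i + β_j - 1, 0) ≥ γ`. -/
def constr (α γ : ℝ) {k : ℕ} (H : SimpleGraph (Fin k)) [DecidableRel H.Adj]
    (β : Fin k → ℝ) : Prop :=
  γ ≤ ∑ i, max (1 - α * β i) 0 + ∑ e ∈ H.edgeFinset, edgeMin β e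

/-- `R(H)`: the maximum of `Σ_i min(1 - αβ_i, 0)` over the feasible set. -/
def RH (α γ : ℝ) {k : ℕ} (H : SimpleGraph (Fin k)) [DecidableRel H.Adj] : ℝ :=
  sSup ((fun β : Fin k → ℝ => ∑ i, min (1 - α * β i) 0) ''
    {β ∈ box k | constr α γ H β})

lemma edgeMin_cont {k : ℕ} (e : Sym2 (Fin k)) :
    Continuous fun β : Fin k → ℝ => edgeMin β e := by
  induction e using Sym2.ind with
  | _ i j =>
    have : (fun β : Fin k → ℝ => edgeMin β s(i, j)) =
        fun β => min (β i + β j - 1) 0 := by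
      funext β; simp [edgeMin]
    rw [this]
    exact (((continuous_apply i).add (continuous_apply j)).sub continuous_const).min
      continuous_const

lemma objB_cont (α : ℝ) {k : ℕ} (H : SimpleGraph (Fin k)) [DecidableRel H.Adj] :
    Continuous (objB α H) := by
  unfold objB
  apply Continuous.add
  · exact continuous_finset_sum _ fun i _ =>
      continuous_const.sub (continuous_const.mul (continuous_apply i))
  · exact continuous_finset_sum _ fun e _ => edgeMin_cont e

/-- under Assumption 1, if `0 < γ ≤ B(H)` then the constraint defining
`R(H)` is feasible and `R(H) = 0`. -/
theorem stmt13
    (α : ℝ) (hα : α ∈ Set.Ioo (1 : ℝ) 2)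
    (k : ℕ) (H : SimpleGraph (Fin k)) [DecidableRel H.Adj]
    (hass : ∀ β ∈ box k, objB α H β = BH α H → ∀ i, β i < 1 / α)
    (γ : ℝ) (hγ : 0 < γ) (hγB : γ ≤ BH α H) :
    (∃ β ∈ box k, constr α γ H β) ∧ RH α γ H = 0 := by
  have hαpos : (0:ℝ) < α := lt_trans one_pos hα.1
  -- box compact and nonempty
  have hbox : box k = Set.pi Set.univ (fun _ : Fin k => Set.Icc (0:ℝ) 1) := by
    ext β; simp [box, Set.mem_pi, Pi.le_def, forall_and]
  have hcpt : IsCompact (box k) := by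
    rw [hbox]; exact isCompact_univ_pi fun _ => isCompact_Icc
  have hne : (box k).Nonempty := ⟨fun _ => 0, fun i => ⟨le_refl _, zero_le_one⟩⟩
  obtain ⟨β, hβmem, hβmax⟩ := hcpt.exists_isMaxOn hne (objB_cont α H).continuousOn
  have hgreat : IsGreatest (objB α H '' box k) (objB α H β) :=
    ⟨Set.mem_image_of_mem _ hβmem, by rintro _ ⟨b, hb, rfl⟩; exact hβmax hb⟩
  have hBH : objB α H β = BH α H := (hgreat.csSup_eq).symm
  have hlt : ∀ i, β i < 1 / α := hass β hβmem hBH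
  have hpos : ∀ i, 0 < 1 - α * β i := by
    intro i
    have := (lt_div_iff₀ hαpos).mp (hlt i)
    nlinarith [hlt i]
  have hconstr : constr α γ H β := by
    unfold constr
    have : ∑ i, max (1 - α * β i) 0 = ∑ i, (1 - α * β i) := by
      refine Finset.sum_congr rfl fun i _ => ?_
      exact max_eq_left (le_of_lt (hpos i))
    rw [this]
    calc γ ≤ BH α H := hγB
      _ = objB α H β := hBH.symm
      _ = _ := rfl
  refine ⟨⟨β, hβmem, hconstr⟩, ?_⟩
  -- RH = 0
  have hmemβ : β ∈ {b ∈ box k | constr α γ H b} := ⟨hβmem, hconstr⟩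
  have hval : ∑ i, min (1 - α * β i) 0 = 0 := by
    refine Finset.sum_eq_zero fun i _ => min_eq_right (le_of_lt (hpos i))
  have hub : ∀ x ∈ ((fun b : Fin k → ℝ => ∑ i, min (1 - α * b i) 0) ''
      {b ∈ box k | constr α γ H b}), x ≤ 0 := by
    rintro _ ⟨b, _, rfl⟩
    exact Finset.sum_nonpos fun i _ => min_le_right _ _
  unfold RH
  apply le_antisymm
  · exact csSup_le ⟨_, Set.mem_image_of_mem _ hmemβ⟩ hub
  · have h := le_csSup (s := (fun b : Fin k → ℝ => ∑ i, min (1 - α * b i) 0) ''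
      {b ∈ box k | constr α γ H b}) ⟨0, hub⟩ (Set.mem_image_of_mem _ hmemβ)
    simpa [hval] using h
end
end

section
/- Let X and Y be independent random variables taking values in [1,∞), each with tail P(X > x) = x^{-α}(1+o(1)) as x → ∞ for some α ∈ (1,2). Then P(XY > t) = Θ(t^{−α} log t) as t → ∞; i.e. there exist constants 0 < c ≤ C and t_0 such that c · t^{−α} log t ≤ P(XY > t) ≤ C · t^{−α} log t for all t ≥ t_0. -/
/-!
Decompose according to the dyadic shell `2ᵏ < X ≤ 2ᵏ⁺¹`, of probability `≍ 2^{-kα}`. On that shell,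
`XY > t` amounts to `Y > t / 2ᵏ`, of probability `≍ (t / 2ᵏ)^{-α}`, so by independence every shell
contributes `≍ t^{-α}`, whatever `k`. For the upper bound, only the `≈ log₂ t` shells below `t` matter,
since `P(X ≥ t) = O(t^{-α})`. For the lower bound, the `≈ ½ log₂ t` shells with both `2ᵏ` and `t / 2ᵏ`
in the range where the tail asymptotics hold each contribute at least `c t^{-α}`.
-/

open MeasureTheory Filter Set Real Topology ProbabilityTheory

section RegularlyDecaying

variable {f : ℝ → ℝ} {α L : ℝ}

lemma rpow_neg_mul_rpow_self {x : ℝ} (hx : 0 < x) (α : ℝ) : x ^ (-α) * x ^ α = 1 := by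
  rw [← rpow_add hx, neg_add_cancel, rpow_zero]

theorem eventually_mul_rpow_neg_le_of_tendsto (h : Tendsto (fun x ↦ x ^ α * f x) atTop (𝓝 L))
    {c : ℝ} (hc : c < L) : ∀ᶠ x in atTop, c * x ^ (-α) ≤ f x := by
  filter_upwards [h.eventually (lt_mem_nhds hc), eventually_gt_atTop 0] with x hx hx0
  calc c * x ^ (-α) ≤ x ^ α * f x * x ^ (-α) := by gcongr
    _ = f x := by linear_combination f x * rpow_neg_mul_rpow_self hx0 α

theorem eventually_le_mul_rpow_neg_of_tendsto (h : Tendsto (fun x ↦ x ^ α * f x) atTop (𝓝 L))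
    {c : ℝ} (hc : L < c) : ∀ᶠ x in atTop, f x ≤ c * x ^ (-α) := by
  filter_upwards [h.eventually (gt_mem_nhds hc), eventually_gt_atTop 0] with x hx hx0
  calc f x = x ^ α * f x * x ^ (-α) := by linear_combination -f x * rpow_neg_mul_rpow_self hx0 α
    _ ≤ c * x ^ (-α) := by gcongr

theorem tendsto_rpow_mul_sub_comp_mul (h : Tendsto (fun x ↦ x ^ α * f x) atTop (𝓝 L))
    {b : ℝ} (hb : 0 < b) :
    Tendsto (fun x ↦ x ^ α * (f x - f (b * x))) atTop (𝓝 (L - b ^ (-α) * L)) := by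
  have hbx : Tendsto (fun x ↦ (b * x) ^ α * f (b * x)) atTop (𝓝 L) :=
    h.comp (tendsto_id.const_mul_atTop hb)
  refine (h.sub (hbx.const_mul (b ^ (-α)))).congr' ?_
  filter_upwards [eventually_ge_atTop 0] with x hx
  rw [mul_rpow hb.le hx]
  linear_combination -x ^ α * f (b * x) * rpow_neg_mul_rpow_self hb α

theorem exists_forall_le_mul_rpow_neg (hα : 0 ≤ α) (h : Tendsto (fun x ↦ x ^ α * f x) atTop (𝓝 L))
    {B : ℝ} (hB : ∀ x, f x ≤ B) : ∃ M, 0 ≤ M ∧ ∀ x > 0, f x ≤ M * x ^ (-α) := by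
  obtain ⟨x₀, hx₀⟩ := eventually_atTop.1
    ((eventually_le_mul_rpow_neg_of_tendsto h (lt_add_one L)).and (eventually_gt_atTop 0))
  have hx₀0 : 0 < x₀ := (hx₀ x₀ le_rfl).2
  refine ⟨max (L + 1) (|B| * x₀ ^ α), le_max_of_le_right (by positivity), fun x hx ↦ ?_⟩
  rcases le_total x₀ x with hxx | hxx
  · exact (hx₀ x hxx).1.trans (by gcongr; exact le_max_left _ _)
  · calc f x ≤ |B| * (x ^ α * x ^ (-α)) := by
          rw [mul_comm (x ^ α), rpow_neg_mul_rpow_self hx, mul_one]; exact (hB x).trans (le_abs_self B)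
      _ ≤ |B| * x₀ ^ α * x ^ (-α) := by rw [← mul_assoc]; gcongr
      _ ≤ max (L + 1) (|B| * x₀ ^ α) * x ^ (-α) := by gcongr; exact le_max_right _ _

end RegularlyDecaying

lemma eventually_exists_finset_pow_two_between (x₀ : ℝ) :
    ∀ᶠ t in atTop, ∃ S : Finset ℕ, logb 2 t / 2 ≤ S.card ∧ ∀ k ∈ S, x₀ ≤ 2 ^ k ∧ x₀ * 2 ^ k ≤ t := by
  obtain ⟨k₀, hk₀⟩ := pow_unbounded_of_one_lt x₀ one_lt_two
  filter_upwards [(tendsto_logb_atTop one_lt_two).eventually_ge_atTop (4 * k₀ + 2),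
    eventually_ge_atTop 1] with t hlog ht
  obtain ⟨m, hm, hm'⟩ := exists_nat_pow_near ht one_lt_two
  have hlogm : logb 2 t < m + 1 := by
    rw [logb_lt_iff_lt_rpow one_lt_two (by linarith), ← Nat.cast_succ, rpow_natCast]
    exact hm'
  have hk₀m : 2 * k₀ ≤ m := by exact_mod_cast (by linarith : (2 * k₀ : ℝ) ≤ m)
  refine ⟨Finset.Ico k₀ (m - k₀), ?_, fun k hk ↦ ?_⟩
  · rw [Nat.card_Ico, Nat.sub_sub, ← two_mul, Nat.cast_sub hk₀m]
    push_cast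
    linarith
  · rw [Finset.mem_Ico] at hk
    refine ⟨hk₀.le.trans (pow_le_pow_right₀ one_le_two hk.1), ?_⟩
    calc x₀ * 2 ^ k ≤ 2 ^ k₀ * 2 ^ k := by gcongr
      _ = 2 ^ (k₀ + k) := (pow_add _ _ _).symm
      _ ≤ 2 ^ m := pow_le_pow_right₀ one_le_two (by omega)
      _ ≤ t := hm

lemma ProbabilityTheory.IndepFun.measureReal_inter_preimage_eq_mul {Ω β γ : Type*}
    [MeasurableSpace Ω] [MeasurableSpace β] [MeasurableSpace γ] {P : Measure Ω}
    {X : Ω → β} {Y : Ω → γ} (h : IndepFun X Y P) {s : Set β} {t : Set γ}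
    (hs : MeasurableSet s) (ht : MeasurableSet t) :
    P.real (X ⁻¹' s ∩ Y ⁻¹' t) = P.real (X ⁻¹' s) * P.real (Y ⁻¹' t) := by
  simp only [measureReal_def, h.measure_inter_preimage_eq_mul s t hs ht, ENNReal.toReal_mul]

section Product

variable {Ω : Type*} [MeasurableSpace Ω] {P : Measure Ω} {X Y : Ω → ℝ}

lemma measureReal_preimage_Ioc_eq_sub [IsFiniteMeasure P] (hX : Measurable X) {a b : ℝ}
    (hab : a ≤ b) :
    P.real (X ⁻¹' Ioc a b) = P.real {ω | a < X ω} - P.real {ω | b < X ω} := by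
  rw [← Ioi_sdiff_Ioi, preimage_sdiff]
  exact measureReal_sdiff (preimage_mono (Ioi_subset_Ioi hab)) (hX measurableSet_Ioi)

lemma sum_measureReal_mul_le_measureReal_lt_mul [IsFiniteMeasure P] (hXm : Measurable X)
    (hYm : Measurable Y) (hind : IndepFun X Y P) {a : ℕ → ℝ} (ha : Monotone a)
    (ha0 : ∀ k, 0 < a k) {t : ℝ} (ht : 0 ≤ t) (S : Finset ℕ) :
    ∑ k ∈ S, P.real (X ⁻¹' Ioc (a k) (a (k + 1))) * P.real {ω | t / a k < Y ω} ≤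
      P.real {ω | t < X ω * Y ω} := by
  set A : ℕ → Set Ω := fun k ↦ X ⁻¹' Ioc (a k) (a (k + 1)) ∩ Y ⁻¹' Ioi (t / a k)
  have hdisj : (S : Set ℕ).PairwiseDisjoint A := fun i _ j _ hij ↦
    ((ha.pairwise_disjoint_on_Ioc_succ hij).preimage X).mono inter_subset_left inter_subset_left
  have hsub : ∀ k ∈ S, A k ⊆ {ω | t < X ω * Y ω} := by
    rintro k - ω ⟨⟨hXk, -⟩, hYk⟩
    have hX0 : 0 < X ω := (ha0 k).trans hXk
    calc t = a k * (t / a k) := (mul_div_cancel₀ t (ha0 k).ne').symm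
      _ ≤ X ω * (t / a k) := by gcongr; exact div_nonneg ht (ha0 k).le
      _ < X ω * Y ω := mul_lt_mul_of_pos_left hYk hX0
  calc ∑ k ∈ S, P.real (X ⁻¹' Ioc (a k) (a (k + 1))) * P.real {ω | t / a k < Y ω}
      = P.real (⋃ k ∈ S, A k) := by
        rw [measureReal_biUnion_finset hdisj fun k _ ↦ (hXm measurableSet_Ioc).inter
          (hYm measurableSet_Ioi)]
        exact Finset.sum_congr rfl fun k _ ↦
          (hind.measureReal_inter_preimage_eq_mul measurableSet_Ioc measurableSet_Ioi).symm
    _ ≤ P.real {ω | t < X ω * Y ω} := measureReal_mono (iUnion₂_subset hsub)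

lemma measureReal_lt_mul_le_sum [IsFiniteMeasure P] (hind : IndepFun X Y P)
    (hX1 : ∀ ω, 1 ≤ X ω) {t : ℝ} (ht : 0 ≤ t) (K : ℕ) :
    P.real {ω | t < X ω * Y ω} ≤
      ∑ k ∈ Finset.range K, P.real {ω | 2 ^ k ≤ X ω} * P.real {ω | t / 2 ^ (k + 1) < Y ω} +
        P.real {ω | 2 ^ K ≤ X ω} := by
  have hcover : {ω | t < X ω * Y ω} ⊆
      (⋃ k ∈ Finset.range K, X ⁻¹' Ici (2 ^ k) ∩ Y ⁻¹' Ioi (t / 2 ^ (k + 1))) ∪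
        X ⁻¹' Ici (2 ^ K) := by
    intro ω hω
    by_cases hK : 2 ^ K ≤ X ω
    · exact Or.inr hK
    obtain ⟨k, hk, hk'⟩ := exists_nat_pow_near (hX1 ω) one_lt_two
    have hX0 : 0 < X ω := one_pos.trans_le (hX1 ω)
    have hkK : k < K := (pow_lt_pow_iff_right₀ one_lt_two).1 (hk.trans_lt (not_le.1 hK))
    have hY : t / 2 ^ (k + 1) < Y ω := calc
      t / 2 ^ (k + 1) ≤ t / X ω := div_le_div_of_nonneg_left ht hX0 hk'.le
      _ < Y ω := by rw [div_lt_iff₀' hX0]; exact hω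
    exact Or.inl (mem_biUnion (Finset.mem_coe.2 (Finset.mem_range.2 hkK)) ⟨hk, hY⟩)
  calc P.real {ω | t < X ω * Y ω}
      ≤ P.real (⋃ k ∈ Finset.range K, X ⁻¹' Ici (2 ^ k) ∩ Y ⁻¹' Ioi (t / 2 ^ (k + 1))) +
          P.real (X ⁻¹' Ici (2 ^ K)) := (measureReal_mono hcover).trans (measureReal_union_le _ _)
    _ ≤ _ := by
        refine add_le_add ((measureReal_biUnion_finset_le _ _).trans_eq ?_) le_rfl
        exact Finset.sum_congr rfl fun k _ ↦
          hind.measureReal_inter_preimage_eq_mul measurableSet_Ici measurableSet_Ioi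

end Product

section RegularlyVaryingTails

variable {Ω : Type*} [MeasurableSpace Ω] {P : Measure Ω} {X Y : Ω → ℝ} {α : ℝ}

lemma exists_measureReal_lt_le_mul_rpow_neg [IsProbabilityMeasure P] (hα : 0 ≤ α)
    (htail : Tendsto (fun x : ℝ ↦ x ^ α * P.real {ω | x < X ω}) atTop (𝓝 1)) :
    ∃ M, 0 ≤ M ∧ ∀ x > 0, P.real {ω | x < X ω} ≤ M * x ^ (-α) :=
  exists_forall_le_mul_rpow_neg hα htail fun _ ↦ measureReal_le_one

lemma exists_measureReal_le_le_mul_rpow_neg [IsProbabilityMeasure P] (hα : 0 ≤ α)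
    (htail : Tendsto (fun x : ℝ ↦ x ^ α * P.real {ω | x < X ω}) atTop (𝓝 1)) :
    ∃ M, 0 ≤ M ∧ ∀ x > 0, P.real {ω | x ≤ X ω} ≤ M * x ^ (-α) := by
  obtain ⟨M, hM0, hM⟩ := exists_measureReal_lt_le_mul_rpow_neg hα htail
  refine ⟨M * 2 ^ α, by positivity, fun x hx ↦ ?_⟩
  calc P.real {ω | x ≤ X ω} ≤ P.real {ω | x / 2 < X ω} :=
        measureReal_mono fun ω (h : x ≤ X ω) ↦ by show x / 2 < X ω; linarith
    _ ≤ M * (x / 2) ^ (-α) := hM _ (by positivity)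
    _ = M * 2 ^ α * x ^ (-α) := by
        rw [div_rpow hx.le zero_le_two, rpow_neg zero_le_two, div_inv_eq_mul]; ring

theorem exists_pos_eventually_le_measureReal_lt_mul [IsFiniteMeasure P] (hα : 0 < α)
    (hXm : Measurable X) (hYm : Measurable Y) (hind : IndepFun X Y P)
    (htailX : Tendsto (fun x : ℝ ↦ x ^ α * P.real {ω | x < X ω}) atTop (𝓝 1))
    (htailY : Tendsto (fun x : ℝ ↦ x ^ α * P.real {ω | x < Y ω}) atTop (𝓝 1)) :
    ∃ c > 0, ∀ᶠ t in atTop, c * t ^ (-α) * log t ≤ P.real {ω | t < X ω * Y ω} := by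
  have h2α : (2 : ℝ) ^ (-α) < 1 := rpow_lt_one_of_one_lt_of_neg one_lt_two (neg_lt_zero.2 hα)
  set δ : ℝ := (1 - 2 ^ (-α)) / 2
  have hδ : 0 < δ := by simp only [δ]; linarith
  have hshell : ∀ᶠ a in atTop, δ * a ^ (-α) ≤ P.real {ω | a < X ω} - P.real {ω | 2 * a < X ω} :=
    eventually_mul_rpow_neg_le_of_tendsto (tendsto_rpow_mul_sub_comp_mul htailX two_pos)
      (by simp only [δ]; linarith)
  have hY : ∀ᶠ y in atTop, 1 / 2 * y ^ (-α) ≤ P.real {ω | y < Y ω} :=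
    eventually_mul_rpow_neg_le_of_tendsto htailY (by norm_num)
  obtain ⟨x₀, hx₀⟩ := eventually_atTop.1 (hshell.and hY)
  refine ⟨δ / (4 * log 2), by positivity, ?_⟩
  filter_upwards [eventually_exists_finset_pow_two_between x₀, eventually_gt_atTop 0]
    with t ⟨S, hcard, hS⟩ ht
  have hterm : ∀ k ∈ S, δ / 2 * t ^ (-α) ≤
      P.real (X ⁻¹' Ioc (2 ^ k) (2 ^ (k + 1))) * P.real {ω | t / 2 ^ k < Y ω} := by
    intro k hk
    have ha : (0 : ℝ) < 2 ^ k := by positivity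
    have hxa : x₀ ≤ t / 2 ^ k := (le_div_iff₀ ha).2 (hS k hk).2
    rw [pow_succ', measureReal_preimage_Ioc_eq_sub hXm (by linarith)]
    calc δ / 2 * t ^ (-α) = (δ * (2 ^ k) ^ (-α)) * (1 / 2 * (t / 2 ^ k) ^ (-α)) := by
          rw [mul_mul_mul_comm, ← mul_rpow ha.le (div_nonneg ht.le ha.le),
            mul_div_cancel₀ t ha.ne']
          ring
      _ ≤ _ := mul_le_mul (hx₀ _ (hS k hk).1).1 (hx₀ _ hxa).2 (by positivity)
          ((by positivity : 0 ≤ δ * (2 ^ k) ^ (-α)).trans (hx₀ _ (hS k hk).1).1)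
  calc δ / (4 * log 2) * t ^ (-α) * log t = logb 2 t / 2 * (δ / 2 * t ^ (-α)) := by
        rw [logb]; field_simp; ring
    _ ≤ S.card * (δ / 2 * t ^ (-α)) := by gcongr
    _ ≤ ∑ k ∈ S, P.real (X ⁻¹' Ioc (2 ^ k) (2 ^ (k + 1))) * P.real {ω | t / 2 ^ k < Y ω} := by
        simpa using Finset.card_nsmul_le_sum S _ _ hterm
    _ ≤ P.real {ω | t < X ω * Y ω} :=
        sum_measureReal_mul_le_measureReal_lt_mul hXm hYm hind (pow_right_mono₀ one_le_two)
          (fun k ↦ by positivity) ht.le S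

theorem exists_eventually_measureReal_lt_mul_le [IsProbabilityMeasure P] (hα : 0 < α)
    (hind : IndepFun X Y P) (hX1 : ∀ ω, 1 ≤ X ω)
    (htailX : Tendsto (fun x : ℝ ↦ x ^ α * P.real {ω | x < X ω}) atTop (𝓝 1))
    (htailY : Tendsto (fun x : ℝ ↦ x ^ α * P.real {ω | x < Y ω}) atTop (𝓝 1)) :
    ∃ C, ∀ᶠ t in atTop, P.real {ω | t < X ω * Y ω} ≤ C * t ^ (-α) * log t := by
  obtain ⟨M, hM0, hM⟩ := exists_measureReal_le_le_mul_rpow_neg hα.le htailX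
  obtain ⟨N, hN0, hN⟩ := exists_measureReal_lt_le_mul_rpow_neg hα.le htailY
  set A := M * N * 2 ^ α
  refine ⟨(2 * A + M) / log 2, ?_⟩
  filter_upwards [eventually_ge_atTop 2] with t ht
  have ht0 : 0 < t := by linarith
  obtain ⟨m, hm, hm'⟩ := exists_nat_pow_near (by linarith : 1 ≤ t) one_lt_two
  have hterm : ∀ k ∈ Finset.range (m + 1),
      P.real {ω | 2 ^ k ≤ X ω} * P.real {ω | t / 2 ^ (k + 1) < Y ω} ≤ A * t ^ (-α) := by
    intro k _
    have ha : (0 : ℝ) < 2 ^ k := by positivity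
    calc P.real {ω | 2 ^ k ≤ X ω} * P.real {ω | t / 2 ^ (k + 1) < Y ω}
        ≤ (M * (2 ^ k) ^ (-α)) * (N * (t / 2 ^ (k + 1)) ^ (-α)) :=
          mul_le_mul (hM _ ha) (hN _ (by positivity)) measureReal_nonneg (by positivity)
      _ = M * N * (t / 2) ^ (-α) := by
          rw [mul_mul_mul_comm, ← mul_rpow ha.le (by positivity), pow_succ']
          field_simp
      _ = A * t ^ (-α) := by
          rw [div_rpow ht0.le zero_le_two, rpow_neg zero_le_two, div_inv_eq_mul]; ring
  have htail : P.real {ω | 2 ^ (m + 1) ≤ X ω} ≤ M * t ^ (-α) :=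
    (hM _ (by positivity)).trans <|
      mul_le_mul_of_nonneg_left (rpow_le_rpow_of_nonpos ht0 hm'.le (neg_nonpos.2 hα.le)) hM0
  have hm_log : m * log 2 ≤ log t := by
    rw [← log_pow]; exact log_le_log (by positivity) hm
  have hlog2 : log 2 ≤ log t := log_le_log two_pos ht
  have hcoeff : ((m + 1) * A + M) * log 2 ≤ (2 * A + M) * log t := by
    have hA : 0 ≤ A := by positivity
    nlinarith
  calc P.real {ω | t < X ω * Y ω}
      ≤ ∑ k ∈ Finset.range (m + 1),
          P.real {ω | 2 ^ k ≤ X ω} * P.real {ω | t / 2 ^ (k + 1) < Y ω} +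
        P.real {ω | 2 ^ (m + 1) ≤ X ω} := measureReal_lt_mul_le_sum hind hX1 ht0.le (m + 1)
    _ ≤ (m + 1) * (A * t ^ (-α)) + M * t ^ (-α) := by
        grw [Finset.sum_le_card_nsmul _ _ _ hterm, htail]
        simp
    _ = ((m + 1) * A + M) * log 2 / log 2 * t ^ (-α) := by
        field_simp
    _ ≤ (2 * A + M) * log t / log 2 * t ^ (-α) := by gcongr
    _ = (2 * A + M) / log 2 * t ^ (-α) * log t := by ring

end RegularlyVaryingTails

theorem stmt14_general
    (α : ℝ) (hα : α ∈ Set.Ioo (1 : ℝ) 2)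
    {Ω : Type*} [MeasurableSpace Ω] (P : Measure Ω) [IsProbabilityMeasure P]
    (X Y : Ω → ℝ) (hXm : Measurable X) (hYm : Measurable Y)
    (hindep : ProbabilityTheory.IndepFun X Y P)
    (hX1 : ∀ ω, 1 ≤ X ω)
    (htailX : Tendsto (fun x : ℝ => x ^ α * (P {ω | x < X ω}).toReal) atTop (nhds 1))
    (htailY : Tendsto (fun x : ℝ => x ^ α * (P {ω | x < Y ω}).toReal) atTop (nhds 1)) :
    ∃ c C t₀ : ℝ, 0 < c ∧ c ≤ C ∧ ∀ t : ℝ, t₀ ≤ t →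
      c * t ^ (-α) * Real.log t ≤ (P {ω | t < X ω * Y ω}).toReal ∧
      (P {ω | t < X ω * Y ω}).toReal ≤ C * t ^ (-α) * Real.log t := by
  have hα0 : 0 < α := one_pos.trans hα.1
  obtain ⟨c, hc, hlower⟩ :=
    exists_pos_eventually_le_measureReal_lt_mul hα0 hXm hYm hindep htailX htailY
  obtain ⟨C, hupper⟩ := exists_eventually_measureReal_lt_mul_le hα0 hindep hX1 htailX htailY
  obtain ⟨t₀, ht₀⟩ := eventually_atTop.1 ((hlower.and hupper).and (eventually_ge_atTop 1))
  refine ⟨c, max c C, t₀, hc, le_max_left c C, fun t ht ↦ ?_⟩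
  obtain ⟨⟨hl, hu⟩, ht1⟩ := ht₀ t ht
  have hg : 0 ≤ t ^ (-α) * log t := mul_nonneg (rpow_nonneg (by linarith) _) (log_nonneg ht1)
  refine ⟨hl, hu.trans ?_⟩
  simp only [mul_assoc]
  exact mul_le_mul_of_nonneg_right (le_max_right c C) hg

/-- if `X, Y` are independent, `[1,∞)`-valued and
`P(X > x) = x^{-α}(1+o(1))`, `P(Y > x) = x^{-α}(1+o(1))` with `α ∈ (1,2)`, then
`P(XY > t) = Θ(t^{-α} log t)`. -/
theorem stmt14
    (α : ℝ) (hα : α ∈ Set.Ioo (1 : ℝ) 2)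
    {Ω : Type*} [MeasurableSpace Ω] (P : Measure Ω) [IsProbabilityMeasure P]
    (X Y : Ω → ℝ) (hXm : Measurable X) (hYm : Measurable Y)
    (hindep : ProbabilityTheory.IndepFun X Y P)
    (hX1 : ∀ ω, 1 ≤ X ω) (hY1 : ∀ ω, 1 ≤ Y ω)
    (htailX : Tendsto (fun x : ℝ => x ^ α * (P {ω | x < X ω}).toReal) atTop (nhds 1))
    (htailY : Tendsto (fun x : ℝ => x ^ α * (P {ω | x < Y ω}).toReal) atTop (nhds 1)) :
    ∃ c C t₀ : ℝ, 0 < c ∧ c ≤ C ∧ ∀ t : ℝ, t₀ ≤ t →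
      c * t ^ (-α) * Real.log t ≤ (P {ω | t < X ω * Y ω}).toReal ∧
      (P {ω | t < X ω * Y ω}).toReal ≤ C * t ^ (-α) * Real.log t :=
  stmt14_general α hα P X Y hXm hYm hindep hX1 htailX htailY
end
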